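/- arXiv:math/9903020 — 6 statements merged into one kernel-verified Lean document; each statement's English description precedes it below -/
import Mathlib

section
/- For any indeterminate X and integer n ≥ 1, the sum over partitions μ of n of (-1)^{n - ℓ(μ)} X^{ℓ(μ)} / z_μ equals the binomial coefficient C(X, n) = X(X-1)...(X-n+1)/n!. -/
open Finset

/-- Ferrers diagram of a list of row lengths: cells `(i,j)` with `i` a row index
and `j < l[i]`. -/
def diagram (l : List ℕ) : Finset (ℕ × ℕ) :=
  (Finset.range l.length).biUnion fun i => (Finset.range (l.getD i 0)).image fun j => (i, j)

/-- `gbc l r` = `⟨λ, r⟩`: the number of `r`-element subsets of the Ferrers diagram of `l`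
containing at least one cell in every row. -/
def gbc (l : List ℕ) (r : ℕ) : ℕ :=
  (((diagram l).powersetCard r).filter
    (fun S => ∀ i ∈ Finset.range l.length, ∃ c ∈ S, c.1 = i)).card

/-- `⟨λ, r⟩` for integer `r`, zero for negative `r`. -/
def gbcZ (l : List ℕ) (r : ℤ) : ℕ := if 0 ≤ r then gbc l r.toNat else 0

/-- `⟨μ, r⟩` for a partition `μ` of `n`. -/
def gbcP {n : ℕ} (μ : n.Partition) (r : ℕ) : ℕ :=
  gbc (μ.parts.sort (· ≥ ·)) r

/-- `z_μ = ∏_{i ≥ 1} i^{m_i(μ)} m_i(μ)!`. -/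
def zMu {n : ℕ} (μ : n.Partition) : ℕ :=
  ∏ i ∈ μ.parts.toFinset, i ^ μ.parts.count i * (μ.parts.count i).factorial

/-- rising factorial `(a)_s = a(a+1)⋯(a+s-1)`. -/
def asc (a s : ℕ) : ℕ := ∏ t ∈ Finset.range s, (a + t)

/-- polynomial binomial coefficient `C(x, r) = x(x-1)⋯(x-r+1)/r!`. -/
def cb (x : ℚ) (r : ℕ) : ℚ := (∏ t ∈ Finset.range r, (x - t)) / r.factorial

/-- `h_k(1^x) = C(x+k-1, k) = x(x+1)⋯(x+k-1)/k!` as a polynomial in `x`. -/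
def hp (x : ℚ) (k : ℕ) : ℚ := (∏ t ∈ Finset.range k, (x + t)) / k.factorial

/-- integer binomial coefficient with the convention `C(a,b) = 0` unless `0 ≤ b ≤ a`. -/
def bin (a b : ℤ) : ℚ := if 0 ≤ b ∧ b ≤ a then ((a.toNat).choose b.toNat : ℚ) else 0

/-- integer binomial coefficient with the additional convention `C(-1,-1) = 1`. -/
def binC (a b : ℤ) : ℚ := if a = -1 ∧ b = -1 then 1 else bin a b

/-- unsigned Stirling numbers of the first kind:
`x(x+1)⋯(x+n-1) = ∑_k stir n k * x^k`. -/
def stir : ℕ → ℕ → ℕ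
  | 0, 0 => 1
  | 0, _ + 1 => 0
  | _ + 1, 0 => 0
  | n + 1, k + 1 => n * stir n (k + 1) + stir n k

namespace Stmt1Aux

/-- `z` as a function of the multiset of parts. -/
def Z (s : Multiset ℕ) : ℕ := ∏ i ∈ s.toFinset, i ^ s.count i * (s.count i).factorial

/-- weight of a multiset of parts. -/
noncomputable def W (X : ℚ) (s : Multiset ℕ) : ℚ :=
  (-1 : ℚ) ^ (s.sum - Multiset.card s) * X ^ (Multiset.card s) / Z s

/-- the multisets of parts of partitions of `m`. -/
def P (m : ℕ) : Finset (Multiset ℕ) := Finset.univ.image (Nat.Partition.parts (n := m))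

lemma mem_P {m : ℕ} {s : Multiset ℕ} : s ∈ P m ↔ s.sum = m ∧ ∀ i ∈ s, 0 < i := by
  constructor
  · intro h
    simp only [P, Finset.mem_image, Finset.mem_univ, true_and] at h
    obtain ⟨μ, rfl⟩ := h
    exact ⟨μ.parts_sum, fun i hi => μ.parts_pos hi⟩
  · rintro ⟨h1, h2⟩
    simp only [P, Finset.mem_image, Finset.mem_univ, true_and]
    exact ⟨⟨s, fun {i} hi => h2 i hi, h1⟩, rfl⟩

lemma sum_part {m : ℕ} (f : Multiset ℕ → ℚ) :
    ∑ μ : m.Partition, f μ.parts = ∑ s ∈ P m, f s := by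
  rw [P, Finset.sum_image]
  intro a _ b _ h
  exact Nat.Partition.ext h

lemma Z_cons (i : ℕ) (t : Multiset ℕ) :
    Z (i ::ₘ t) = (i * (t.count i + 1)) * Z t := by
  classical
  set f : Multiset ℕ → ℕ → ℕ := fun u j => j ^ u.count j * (u.count j).factorial with hf
  have hZs : Z (i ::ₘ t) = f (i ::ₘ t) i * ∏ j ∈ t.toFinset.erase i, f (i ::ₘ t) j := by
    rw [Z, Multiset.toFinset_cons,
      ← Finset.mul_prod_erase _ _ (Finset.mem_insert_self i t.toFinset),
      Finset.erase_insert_eq_erase]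
  have hZt : Z t = f t i * ∏ j ∈ t.toFinset.erase i, f t j := by
    by_cases hi : i ∈ t
    · rw [Z, ← Finset.mul_prod_erase _ _ (Multiset.mem_toFinset.2 hi)]
    · have h0 : t.count i = 0 := Multiset.count_eq_zero.2 hi
      rw [Z, hf]
      simp only [h0, pow_zero, Nat.factorial_zero, mul_one, one_mul]
      rw [Finset.erase_eq_of_notMem (by simp [hi])]
  have hprod : ∏ j ∈ t.toFinset.erase i, f (i ::ₘ t) j = ∏ j ∈ t.toFinset.erase i, f t j := by
    refine Finset.prod_congr rfl fun j hj => ?_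
    have hji : j ≠ i := (Finset.mem_erase.1 hj).1
    simp [hf, Multiset.count_cons_of_ne hji]
  rw [hZs, hZt, hprod, hf]
  simp only [Multiset.count_cons_self]
  rw [pow_succ, Nat.factorial_succ]
  ring

lemma card_le_sum {s : Multiset ℕ} (h : ∀ i ∈ s, 0 < i) : Multiset.card s ≤ s.sum := by
  induction s using Multiset.induction with
  | empty => simp
  | cons a s ih =>
    simp only [Multiset.card_cons, Multiset.sum_cons]
    have ha : 0 < a := h a (Multiset.mem_cons_self a s)
    have := ih fun i hi => h i (Multiset.mem_cons_of_mem hi)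
    omega

lemma msum_eq (s : Multiset ℕ) : s.sum = ∑ a ∈ s.toFinset, s.count a * a := by
  conv_lhs => rw [show s = s.map id from (Multiset.map_id s).symm]
  rw [Finset.sum_multiset_map_count]
  simp [smul_eq_mul]

lemma key_term (X : ℚ) (n : ℕ) (s : Multiset ℕ) (hs : s ∈ P n) (i : ℕ) (hi : i ∈ s) :
    ((i * s.count i : ℕ) : ℚ) * W X s = (-1 : ℚ) ^ (i - 1) * X * W X (s.erase i) := by
  obtain ⟨hsum, hpos⟩ := mem_P.1 hs
  set t := s.erase i with ht
  have hcons : i ::ₘ t = s := Multiset.cons_erase hi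
  have hZ : Z s = (i * (t.count i + 1)) * Z t := by rw [← hcons, Z_cons]
  have hcount : s.count i = t.count i + 1 := by
    rw [← hcons, Multiset.count_cons_self]
  have hcard : Multiset.card s = Multiset.card t + 1 := by
    rw [← hcons]; simp
  have hsum' : s.sum = i + t.sum := by rw [← hcons]; simp
  have hipos : 0 < i := hpos i hi
  have htpos : ∀ j ∈ t, 0 < j := fun j hj => hpos j (Multiset.mem_of_mem_erase hj)
  have hcs : Multiset.card t ≤ t.sum := card_le_sum htpos
  have hexp : s.sum - Multiset.card s = (i - 1) + (t.sum - Multiset.card t) := by omega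
  have ha : ((i * (t.count i + 1) : ℕ) : ℚ) ≠ 0 := by positivity
  rw [W, W, hexp, hZ, hcard, hcount]
  push_cast
  rw [pow_add, pow_succ]
  rcases eq_or_ne ((Z t : ℚ)) 0 with h0 | h0
  · simp [h0]
  · have ha' : (i : ℚ) * ((t.count i : ℚ) + 1) ≠ 0 := by positivity
    field_simp

lemma rec_key (X : ℚ) (n : ℕ) :
    (n : ℚ) * ∑ s ∈ P n, W X s
      = ∑ i ∈ Finset.Icc 1 n, ((-1 : ℚ) ^ (i - 1) * X * ∑ t ∈ P (n - i), W X t) := by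
  rw [Finset.mul_sum]
  have lhs_eq : ∀ s ∈ P n, (n : ℚ) * W X s
      = ∑ i ∈ s.toFinset, ((i * s.count i : ℕ) : ℚ) * W X s := by
    intro s hs
    obtain ⟨hsum, _⟩ := mem_P.1 hs
    rw [← Finset.sum_mul, ← Nat.cast_sum]
    congr 2
    rw [← hsum, msum_eq]
    exact Finset.sum_congr rfl fun i _ => by ring
  rw [Finset.sum_congr rfl lhs_eq, Finset.sum_sigma']
  have rhs_eq : ∀ i ∈ Finset.Icc 1 n, (-1 : ℚ) ^ (i - 1) * X * ∑ t ∈ P (n - i), W X t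
      = ∑ t ∈ P (n - i), (-1 : ℚ) ^ (i - 1) * X * W X t := fun i _ => Finset.mul_sum _ _ _
  rw [Finset.sum_congr rfl rhs_eq, Finset.sum_sigma']
  refine Finset.sum_bij' (fun p _ => (⟨p.2, p.1.erase p.2⟩ : (_ : ℕ) × Multiset ℕ))
    (fun q _ => (⟨q.1 ::ₘ q.2, q.1⟩ : (_ : Multiset ℕ) × ℕ)) ?_ ?_ ?_ ?_ ?_
  · rintro ⟨s, i⟩ hp
    simp only [Finset.mem_sigma] at hp ⊢
    obtain ⟨hs, hi⟩ := hp
    have him : i ∈ s := Multiset.mem_toFinset.1 hi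
    obtain ⟨hsum, hpos⟩ := mem_P.1 hs
    have h1 : 1 ≤ i := hpos i him
    have h2 : i ≤ s.sum := Multiset.single_le_sum (fun x _ => Nat.zero_le x) i him
    have hes : i + (s.erase i).sum = s.sum := by
      rw [← Multiset.sum_cons, Multiset.cons_erase him]
    refine ⟨Finset.mem_Icc.2 ⟨h1, by omega⟩, mem_P.2 ⟨by omega,
      fun j hj => hpos j (Multiset.mem_of_mem_erase hj)⟩⟩
  · rintro ⟨i, t⟩ hq
    simp only [Finset.mem_sigma] at hq ⊢
    obtain ⟨hi, ht⟩ := hq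
    obtain ⟨h1, h2⟩ := Finset.mem_Icc.1 hi
    obtain ⟨hsum, hpos⟩ := mem_P.1 ht
    refine ⟨mem_P.2 ⟨by rw [Multiset.sum_cons, hsum]; omega, ?_⟩, ?_⟩
    · intro j hj
      rcases Multiset.mem_cons.1 hj with rfl | hj
      · omega
      · exact hpos j hj
    · simp
  · rintro ⟨s, i⟩ hp
    simp only [Finset.mem_sigma] at hp
    have := Multiset.cons_erase (Multiset.mem_toFinset.1 hp.2)
    simp [this]
  · rintro ⟨i, t⟩ _
    simp [Multiset.erase_cons_head]
  · rintro ⟨s, i⟩ hp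
    simp only [Finset.mem_sigma] at hp
    exact key_term X n s hp.1 i (Multiset.mem_toFinset.1 hp.2)

lemma P_zero : P 0 = {0} := by
  ext s
  simp only [Finset.mem_singleton, mem_P]
  constructor
  · rintro ⟨h1, h2⟩
    rw [Multiset.eq_zero_iff_forall_notMem]
    intro a ha
    have := h2 a ha
    have := Multiset.single_le_sum (fun x _ => Nat.zero_le x) a ha
    omega
  · rintro rfl
    simp

lemma prod_shift (X : ℚ) (m : ℕ) :
    ∏ t ∈ Finset.range (m + 1), (X - t) = X * ∏ t ∈ Finset.range m, (X - 1 - t) := by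
  rw [Finset.prod_range_succ']
  simp only [Nat.cast_zero, sub_zero, Nat.cast_add, Nat.cast_one]
  rw [mul_comm]
  congr 1
  exact Finset.prod_congr rfl fun t _ => by ring

lemma pascal (X : ℚ) (m : ℕ) : cb (X - 1) (m + 1) + cb (X - 1) m = cb X (m + 1) := by
  have e1 : ∏ t ∈ Finset.range (m + 1), (X - 1 - t)
      = (∏ t ∈ Finset.range m, (X - 1 - t)) * (X - 1 - m) := Finset.prod_range_succ _ _
  have e2 : ∏ t ∈ Finset.range (m + 1), (X - t)
      = X * ∏ t ∈ Finset.range m, (X - 1 - t) := prod_shift X m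
  have h1 : (m.factorial : ℚ) ≠ 0 := Nat.cast_ne_zero.2 m.factorial_ne_zero
  rw [cb, cb, cb, e1, e2, Nat.factorial_succ]
  push_cast
  field_simp
  ring

lemma alt_sum (X : ℚ) (m : ℕ) :
    ∑ j ∈ Finset.range (m + 1), (-1 : ℚ) ^ (m - j) * cb X j = cb (X - 1) m := by
  induction m with
  | zero => simp [cb]
  | succ m ih =>
    rw [Finset.sum_range_succ]
    have hcongr : ∀ j ∈ Finset.range (m + 1),
        (-1 : ℚ) ^ (m + 1 - j) * cb X j = -((-1 : ℚ) ^ (m - j) * cb X j) := by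
      intro j hj
      have hj' : j ≤ m := Nat.lt_succ_iff.1 (Finset.mem_range.1 hj)
      rw [show m + 1 - j = (m - j) + 1 by omega, pow_succ]
      ring
    rw [Finset.sum_congr rfl hcongr, Finset.sum_neg_distrib, ih]
    simp only [Nat.sub_self, pow_zero, one_mul]
    have := pascal X m
    linarith

lemma F_eq (n : ℕ) (X : ℚ) : ∑ s ∈ P n, W X s = cb X n := by
  induction n using Nat.strong_induction_on with
  | _ n ih =>
    rcases Nat.eq_zero_or_pos n with rfl | hn
    · rw [P_zero]
      simp [W, Z, cb]
    · have key := rec_key X n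
      have hIH : ∀ i ∈ Finset.Icc 1 n,
          (-1 : ℚ) ^ (i - 1) * X * ∑ t ∈ P (n - i), W X t
            = (-1 : ℚ) ^ (i - 1) * X * cb X (n - i) := by
        intro i hi
        obtain ⟨h1, h2⟩ := Finset.mem_Icc.1 hi
        rw [ih (n - i) (by omega)]
      rw [Finset.sum_congr rfl hIH] at key
      have reidx : ∑ i ∈ Finset.Icc 1 n, (-1 : ℚ) ^ (i - 1) * X * cb X (n - i)
          = X * ∑ j ∈ Finset.range n, (-1 : ℚ) ^ (n - 1 - j) * cb X j := by
        rw [Finset.mul_sum]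
        refine Finset.sum_bij' (fun i _ => n - i) (fun j _ => n - j) ?_ ?_ ?_ ?_ ?_
        · intro i hi; simp only [Finset.mem_Icc] at hi; simp only [Finset.mem_range]; omega
        · intro j hj; simp only [Finset.mem_range] at hj; simp only [Finset.mem_Icc]; omega
        · intro i hi; simp only [Finset.mem_Icc] at hi; omega
        · intro j hj; simp only [Finset.mem_range] at hj; omega
        · intro i hi
          simp only [Finset.mem_Icc] at hi
          rw [show n - 1 - (n - i) = i - 1 by omega]
          ring
      have halt := alt_sum X (n - 1)
      rw [show n - 1 + 1 = n by omega] at halt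
      rw [reidx, halt] at key
      have final : X * cb (X - 1) (n - 1) = (n : ℚ) * cb X n := by
        have e2 : ∏ t ∈ Finset.range n, (X - t)
            = X * ∏ t ∈ Finset.range (n - 1), (X - 1 - t) := by
          have := prod_shift X (n - 1)
          rwa [show n - 1 + 1 = n by omega] at this
        have e3 : n.factorial = n * (n - 1).factorial := by
          conv_lhs => rw [show n = (n - 1) + 1 by omega]
          rw [Nat.factorial_succ]
          congr 1
          omega
        have h1 : ((n - 1).factorial : ℚ) ≠ 0 := Nat.cast_ne_zero.2 (n - 1).factorial_ne_zero
        have h2 : (n : ℚ) ≠ 0 := Nat.cast_ne_zero.2 (by omega)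
        rw [cb, cb, e2, e3]
        push_cast
        field_simp
      rw [final] at key
      exact mul_left_cancel₀ (Nat.cast_ne_zero.2 (by omega : n ≠ 0)) key

end Stmt1Aux

theorem stmt1 (n : ℕ) (hn : 1 ≤ n) (X : ℚ) :
    ∑ μ : n.Partition, (-1 : ℚ) ^ (n - μ.parts.card) * X ^ μ.parts.card / zMu μ
      = cb X n := by
  have hW : ∀ μ : n.Partition,
      (-1 : ℚ) ^ (n - μ.parts.card) * X ^ μ.parts.card / zMu μ = Stmt1Aux.W X μ.parts := by
    intro μ
    rw [Stmt1Aux.W, μ.parts_sum]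
    rfl
  rw [Finset.sum_congr rfl fun μ _ => hW μ, Stmt1Aux.sum_part (Stmt1Aux.W X),
    Stmt1Aux.F_eq]
end

section
/- For any indeterminate X and integer n ≥ 1, the sum over partitions μ of n of X^{ℓ(μ)} / z_μ equals the binomial coefficient C(X + n - 1, n). -/
open Finset

def Z (s : Multiset ℕ) : ℕ := ∏ i ∈ s.toFinset, i ^ s.count i * (s.count i).factorial

lemma Z_cons (k : ℕ) (s : Multiset ℕ) :
    Z (k ::ₘ s) = k * (s.count k + 1) * Z s := by
  unfold Z
  by_cases hk : k ∈ s.toFinset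
  · rw [Multiset.toFinset_cons, Finset.insert_eq_self.2 hk,
      ← Finset.mul_prod_erase _ _ hk,
      ← Finset.mul_prod_erase _ (fun i => i ^ s.count i * (s.count i).factorial) hk]
    have hc : ∀ i ∈ s.toFinset.erase k,
        i ^ (k ::ₘ s).count i * ((k ::ₘ s).count i).factorial
          = i ^ s.count i * (s.count i).factorial := by
      intro i hi
      rw [Multiset.count_cons_of_ne (Finset.ne_of_mem_erase hi)]
    rw [Finset.prod_congr rfl hc, Multiset.count_cons_self, pow_succ, Nat.factorial_succ]
    ring
  · have hc0 : s.count k = 0 := by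
      simpa [Multiset.count_eq_zero] using fun h => hk (Multiset.mem_toFinset.2 h)
    rw [Multiset.toFinset_cons, Finset.prod_insert hk]
    have hc : ∀ i ∈ s.toFinset,
        i ^ (k ::ₘ s).count i * ((k ::ₘ s).count i).factorial
          = i ^ s.count i * (s.count i).factorial := by
      intro i hi
      have : i ≠ k := fun h => hk (h ▸ hi)
      rw [Multiset.count_cons_of_ne this]
    rw [Finset.prod_congr rfl hc, Multiset.count_cons_self, hc0]
    norm_num [Nat.factorial]

lemma Z_pos (s : Multiset ℕ) (hs : ∀ i ∈ s, 0 < i) : 0 < Z s := by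
  refine Finset.prod_pos fun i hi => ?_
  exact Nat.mul_pos (pow_pos (hs i (Multiset.mem_toFinset.1 hi)) _)
    (Nat.factorial_pos _)

def S (X : ℚ) (m : ℕ) : ℚ := ∑ μ : m.Partition, X ^ Multiset.card μ.parts / Z μ.parts

lemma S_zero (X : ℚ) : S X 0 = 1 := by
  rw [S, Fintype.sum_unique]
  simp [Z]

lemma sum_eq_sum_count (s : Multiset ℕ) : s.sum = ∑ a ∈ s.toFinset, s.count a * a := by
  have := Finset.sum_multiset_map_count s (id : ℕ → ℕ)
  simpa [smul_eq_mul] using this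

/-- remove a part from a partition of `n`, getting a partition of `n - k`. -/
def eraseP (n : ℕ) (p : Σ μ : n.Partition, ℕ) (hp : p.2 ∈ p.1.parts) :
    Σ k : ℕ, (n - k).Partition :=
  ⟨p.2, ⟨p.1.parts.erase p.2,
    fun hi => p.1.parts_pos (Multiset.mem_of_mem_erase hi),
    by
      have h1 : p.2 + (p.1.parts.erase p.2).sum = n := by
        rw [← Multiset.sum_cons, Multiset.cons_erase hp, p.1.parts_sum]
      omega⟩⟩

/-- add a part `k ≤ n` to a partition of `n - k`, getting a partition of `n`. -/
def consP (n : ℕ) (q : Σ k : ℕ, (n - k).Partition) (hq : 1 ≤ q.1 ∧ q.1 ≤ n) :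
    Σ μ : n.Partition, ℕ :=
  ⟨⟨q.1 ::ₘ q.2.parts,
    fun hi => by
      rcases Multiset.mem_cons.1 hi with h | h
      · omega
      · exact q.2.parts_pos h,
    by rw [Multiset.sum_cons, q.2.parts_sum]; omega⟩, q.1⟩

lemma key (X : ℚ) (n : ℕ) : (n : ℚ) * S X n = X * ∑ j ∈ Finset.range n, S X j := by
  have hR : X * ∑ j ∈ Finset.range n, S X j
      = ∑ k ∈ Finset.Icc 1 n, ∑ ν : (n - k).Partition,
          X ^ (Multiset.card ν.parts + 1) / Z ν.parts := by
    rw [Finset.mul_sum]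
    refine Finset.sum_bij' (fun j _ => n - j) (fun k _ => n - k) ?_ ?_ ?_ ?_ ?_
    · intro a ha
      rw [Finset.mem_range] at ha
      show n - a ∈ Finset.Icc 1 n
      rw [Finset.mem_Icc]
      omega
    · intro b hb
      rw [Finset.mem_Icc] at hb
      show n - b ∈ Finset.range n
      rw [Finset.mem_range]
      omega
    · intro a ha
      rw [Finset.mem_range] at ha
      show n - (n - a) = a
      omega
    · intro b hb
      rw [Finset.mem_Icc] at hb
      show n - (n - b) = b
      omega
    · intro a ha
      rw [Finset.mem_range] at ha
      have : n - (n - a) = a := by omega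
      rw [this, S, Finset.mul_sum]
      refine Finset.sum_congr rfl fun ν _ => ?_
      rw [pow_succ]
      ring
  have hL : (n : ℚ) * S X n
      = ∑ μ : n.Partition, ∑ k ∈ μ.parts.toFinset,
          (μ.parts.count k * k : ℚ) * (X ^ Multiset.card μ.parts / Z μ.parts) := by
    rw [S, Finset.mul_sum]
    refine Finset.sum_congr rfl fun μ _ => ?_
    rw [← Finset.sum_mul]
    congr 1
    have h2 : (n : ℚ) = ((∑ a ∈ μ.parts.toFinset, μ.parts.count a * a : ℕ) : ℚ) := by
      rw [← sum_eq_sum_count, μ.parts_sum]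
    rw [h2]
    push_cast
    rfl
  rw [hL, hR, Finset.sum_sigma', Finset.sum_sigma']
  refine Finset.sum_bij'
    (fun p hp => eraseP n p (Multiset.mem_toFinset.1 (Finset.mem_sigma.1 hp).2))
    (fun q hq => consP n q (Finset.mem_Icc.1 (Finset.mem_sigma.1 hq).1))
    ?_ ?_ ?_ ?_ ?_
  · intro p hp
    have hmem : p.2 ∈ p.1.parts := Multiset.mem_toFinset.1 (Finset.mem_sigma.1 hp).2
    rw [Finset.mem_sigma]
    constructor
    · rw [Finset.mem_Icc]
      exact ⟨p.1.parts_pos hmem, le_of_le_of_eq (Multiset.le_sum_of_mem hmem) p.1.parts_sum⟩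
    · exact Finset.mem_univ _
  · intro q hq
    rw [Finset.mem_sigma]
    exact ⟨Finset.mem_univ _, Multiset.mem_toFinset.2 (Multiset.mem_cons_self _ _)⟩
  · intro p hp
    have hmem : p.2 ∈ p.1.parts := Multiset.mem_toFinset.1 (Finset.mem_sigma.1 hp).2
    exact Sigma.ext (Nat.Partition.ext (Multiset.cons_erase hmem)) HEq.rfl
  · intro q hq
    exact Sigma.ext rfl (heq_of_eq (Nat.Partition.ext (Multiset.erase_cons_head _ _)))
  · intro p hp
    have hmem : p.2 ∈ p.1.parts := Multiset.mem_toFinset.1 (Finset.mem_sigma.1 hp).2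
    set t := p.1.parts.erase p.2 with ht
    have hrw : p.2 ::ₘ t = p.1.parts := Multiset.cons_erase hmem
    have htpos : ∀ i ∈ t, 0 < i := fun i hi =>
      p.1.parts_pos (Multiset.mem_of_mem_erase (ht ▸ hi))
    have hZ : (Z t : ℚ) ≠ 0 := Nat.cast_ne_zero.2 (Z_pos t htpos).ne'
    have hk : (p.2 : ℚ) ≠ 0 := Nat.cast_ne_zero.2 (p.1.parts_pos hmem).ne'
    show (↑(Multiset.count p.2 p.1.parts) * ↑p.2 : ℚ) * (X ^ Multiset.card p.1.parts / ↑(Z p.1.parts))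
        = X ^ (Multiset.card t + 1) / ↑(Z t)
    rw [← hrw, Multiset.count_cons_self, Multiset.card_cons, Z_cons]
    have hc : ((Multiset.count p.2 t : ℚ) + 1) ≠ 0 := by positivity
    push_cast
    field_simp

lemma hp_succ (X : ℚ) (k : ℕ) : hp X (k + 1) = hp X k * (X + k) / (k + 1) := by
  unfold hp
  rw [Finset.prod_range_succ, Nat.factorial_succ, div_mul_eq_mul_div, div_div]
  push_cast
  rw [mul_comm ((k : ℚ) + 1)]

lemma hp_rec (X : ℚ) : ∀ n : ℕ, X * ∑ j ∈ Finset.range (n + 1), hp X j = (n + 1) * hp X (n + 1) := by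
  intro n
  induction n with
  | zero =>
    simp [hp, Nat.factorial]
  | succ m ih =>
    rw [Finset.sum_range_succ, mul_add, ih, hp_succ X (m + 1)]
    have h : ((m : ℚ) + 1 + 1) ≠ 0 := by positivity
    push_cast
    field_simp
    ring

lemma S_eq_hp (X : ℚ) : ∀ n : ℕ, S X n = hp X n := by
  intro n
  induction n using Nat.strong_induction_on with
  | _ n ih =>
    match n with
    | 0 => rw [S_zero]; simp [hp, Nat.factorial]
    | Nat.succ m =>
      have hk := key X (m + 1)
      have hsum : ∑ j ∈ Finset.range (m + 1), S X j = ∑ j ∈ Finset.range (m + 1), hp X j :=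
        Finset.sum_congr rfl fun j hj => ih j (Finset.mem_range.1 hj)
      rw [hsum, hp_rec X m] at hk
      have hm : ((m : ℚ) + 1) ≠ 0 := by positivity
      have : ((m + 1 : ℕ) : ℚ) = (m : ℚ) + 1 := by push_cast; ring
      rw [this] at hk
      exact mul_left_cancel₀ hm hk

lemma hp_eq_cb (X : ℚ) (n : ℕ) : hp X n = cb (X + n - 1) n := by
  have hnum : ∏ t ∈ Finset.range n, (X + (n : ℚ) - 1 - t) = ∏ t ∈ Finset.range n, (X + (t : ℚ)) := by
    rw [← Finset.prod_range_reflect (fun j => X + (j : ℚ)) n]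
    refine Finset.prod_congr rfl fun t ht => ?_
    rw [Finset.mem_range] at ht
    have h2 : 1 + t ≤ n := by omega
    have h1 : ((n - 1 - t : ℕ) : ℚ) = (n : ℚ) - 1 - t := by
      rw [Nat.sub_sub, Nat.cast_sub h2]
      push_cast
      ring
    rw [h1]
    ring
  unfold cb hp
  rw [hnum]

theorem stmt2 (n : ℕ) (hn : 1 ≤ n) (X : ℚ) :
    ∑ μ : n.Partition, X ^ μ.parts.card / zMu μ = cb (X + n - 1) n := by
  have h1 : (∑ μ : n.Partition, X ^ μ.parts.card / (zMu μ : ℚ)) = S X n := rfl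
  rw [h1, S_eq_hp, hp_eq_cb]
end

section
/- For all integers n, r ≥ 1 and any indeterminate X: the sum over partitions μ of n of (-1)^{r-ℓ(μ)} (⟨μ, r⟩ / z_μ) X^{ℓ(μ)} equals C(n-1, r-1) C(X, r). -/
open Finset

lemma cb_zero (x : ℚ) : cb x 0 = 1 := by simp [cb]

lemma cb_succ (x : ℚ) (r : ℕ) : cb x (r+1) = x / (r+1) * cb (x-1) r := by
  rw [cb, cb, Finset.prod_range_succ']
  push_cast [Nat.factorial_succ]
  have : ∀ t ∈ Finset.range r, x - (↑t + 1) = (x - 1 - ↑t) := by intros; ring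
  rw [Finset.prod_congr rfl this]
  field_simp
  ring

lemma cb_succ' (x : ℚ) (r : ℕ) : cb x (r+1) = cb x r * (x - r) / (r+1) := by
  rw [cb, cb, Finset.prod_range_succ]
  push_cast [Nat.factorial_succ]
  have h1 : (r.factorial : ℚ) ≠ 0 := by positivity
  have h2 : ((r:ℚ)+1) ≠ 0 := by positivity
  field_simp

lemma cb_pascal (x : ℚ) (r : ℕ) : cb x (r+1) = cb (x-1) r + cb (x-1) (r+1) := by
  rw [cb_succ, cb_succ' (x-1) r]
  have h : ((r:ℚ)+1) ≠ 0 := by positivity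
  field_simp
  ring

lemma cb_alt (x : ℚ) (r : ℕ) :
    ∑ s ∈ Finset.range (r+1), (-1:ℚ)^s * cb x s = (-1)^r * cb (x-1) r := by
  induction r with
  | zero => simp [cb_zero]
  | succ r ih =>
    rw [Finset.sum_range_succ, ih, cb_pascal x r]
    ring

lemma cb_mul_nat (x : ℚ) (r : ℕ) : ((r:ℚ)+1) * cb x (r+1) = x * cb (x-1) r := by
  rw [cb_succ]; have h : ((r:ℚ)+1) ≠ 0 := by positivity
  field_simp

-- lower Vandermonde
lemma hockey (m b : ℕ) : ∑ j ∈ Finset.range (m+1), (j.choose b) = (m+1).choose (b+1) := by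
  rw [← Nat.sum_Icc_choose m b]
  rw [Finset.range_eq_Ico]
  symm
  apply Finset.sum_subset
  · intro j hj; simp only [Finset.mem_Icc, Finset.mem_Ico] at *; omega
  · intro j hj hj2; simp only [Finset.mem_Icc, Finset.mem_Ico] at *
    exact Nat.choose_eq_zero_of_lt (by omega)

lemma vander (m a b : ℕ) :
    ∑ i ∈ Finset.range (m+1), (i.choose a) * ((m-i).choose b) = (m+1).choose (a+b+1) := by
  induction m generalizing a b with
  | zero =>
    rcases a with _|a
    · rcases b with _|b
      · simp
      · simp [Nat.choose_eq_zero_of_lt (show 1 < b+1+1 by omega)]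
    · simp [Nat.choose_eq_zero_of_lt (show 1 < a+1+b+1 by omega)]
  | succ m ih =>
    rcases a with _|a
    · simp only [Nat.choose_zero_right, one_mul, Nat.zero_add]
      rw [← hockey (m+1) b, ← Finset.sum_range_reflect (fun j => Nat.choose j b) (m+2)]
      apply Finset.sum_congr rfl
      intro j hj
      congr 1 <;> omega
    · rw [Finset.sum_range_succ' (fun i => (i.choose (a+1)) * ((m+1-i).choose b)) (m+1)]
      simp only [Nat.choose_succ_succ, Nat.zero_sub, Nat.choose_zero_right]
      have : ∀ i ∈ Finset.range (m+1),
          (i.choose a + i.choose (a+1)) * ((m+1-(i+1)).choose b)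
          = i.choose a * ((m-i).choose b) + i.choose (a+1) * ((m-i).choose b) := by
        intro i hi
        have : m + 1 - (i+1) = m - i := by omega
        rw [this, add_mul]
      rw [Finset.sum_congr rfl this, Finset.sum_add_distrib, ih a b, ih (a+1) b]
      rw [Nat.choose_eq_zero_of_lt (show 0 < a+1 by omega)]
      rw [show a+1+b = a+b+1 from by omega]
      simp only [Nat.succ_eq_add_one]
      rw [← Nat.choose_succ_succ m (a+b+1)]
      simp only [Nat.succ_eq_add_one]
      omega



def gn : ℕ → ℕ → ℕ
  | 0, _ => 0
  | m+1, s => m.choose s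

def G (X : ℚ) : ℕ → ℕ → ℚ
  | 0, 0 => 1
  | 0, _+1 => 0
  | _+1, 0 => 0
  | m+1, s+1 => (-1:ℚ)^(s+1) * ((m.choose s : ℕ) : ℚ) * cb X (s+1)

lemma G_succ (X : ℚ) (m s : ℕ) :
    G X m (s+1) = (-1:ℚ)^(s+1) * (gn m s : ℚ) * cb X (s+1) := by
  cases m <;> simp [G, gn]

lemma G_zero_right (X : ℚ) (m : ℕ) : G X m 0 = if m = 0 then 1 else 0 := by
  cases m <;> simp [G]

lemma VL (m a b : ℕ) :
    ∑ k ∈ Finset.Icc 1 (m+1), k.choose (a+1) * gn (m+1-k) b = (m+1).choose (a+b+2) := by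
  have h1 : ∑ k ∈ Finset.Icc 1 (m+1), k.choose (a+1) * gn (m+1-k) b
      = ∑ i ∈ Finset.range (m+1), (1+i).choose (a+1) * gn (m-i) b := by
    rw [← Finset.Ico_add_one_right_eq_Icc, Finset.sum_Ico_eq_sum_range]
    apply Finset.sum_congr (by congr 1)
    intro i _
    congr 2
    omega
  rw [h1]
  have h2 : ∑ i ∈ Finset.range (m+1), (1+i).choose (a+1) * gn (m-i) b
      = ∑ i ∈ Finset.range m, (1+i).choose (a+1) * gn (m-i) b := by
    rw [Finset.sum_range_succ]
    simp [gn]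
  rw [h2]
  have h3 : ∀ i ∈ Finset.range m, (1+i).choose (a+1) * gn (m-i) b
      = (i+1).choose (a+1) * ((m-(i+1)).choose b) := by
    intro i hi
    simp only [Finset.mem_range] at hi
    have : m - i = (m - (i+1)) + 1 := by omega
    rw [this, add_comm 1 i]
    rfl
  rw [Finset.sum_congr rfl h3]
  have h4 := vander m (a+1) b
  rw [Finset.sum_range_succ' (fun k => k.choose (a+1) * ((m-k).choose b)) m] at h4
  simpa [Nat.choose_eq_zero_of_lt (show 0 < a+1 by omega),
    show a+1+b+1 = a+b+2 by ring] using h4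

lemma Grec (X : ℚ) (n r : ℕ) (hn : 1 ≤ n) :
    (n:ℚ) * G X n r
      = -X * ∑ k ∈ Finset.Icc 1 n,
          ((∑ j ∈ Finset.range (r+1), (k.choose j : ℚ) * G X (n-k) (r-j)) - G X (n-k) r) := by
  obtain ⟨m, rfl⟩ : ∃ m, n = m + 1 := ⟨n - 1, by omega⟩
  rcases r with _|r
  · simp [G]
  -- inner sum simplification: cancel j = 0 term
  have inner : ∀ k ∈ Finset.Icc 1 (m+1),
      (∑ j ∈ Finset.range (r+2), (k.choose j : ℚ) * G X (m+1-k) (r+1-j)) - G X (m+1-k) (r+1)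
      = ∑ j ∈ Finset.range (r+1), (k.choose (j+1) : ℚ) * G X (m+1-k) (r-j) := by
    intro k _
    rw [Finset.sum_range_succ' (fun j => (k.choose j : ℚ) * G X (m+1-k) (r+1-j)) (r+1)]
    simp only [Nat.choose_zero_right, Nat.cast_one, one_mul, Nat.sub_zero]
    rw [add_sub_cancel_right]
    apply Finset.sum_congr rfl
    intro j hj
    have : r + 1 - (j+1) = r - j := by omega
    rw [this]
  rw [Finset.sum_congr rfl inner, Finset.sum_comm]
  have key : ∀ j ∈ Finset.range (r+1),
      ∑ k ∈ Finset.Icc 1 (m+1), (k.choose (j+1) : ℚ) * G X (m+1-k) (r-j)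
      = (-1:ℚ)^(r-j) * cb X (r-j) * ((m+1).choose (r+1) : ℚ) := by
    intro j hj
    simp only [Finset.mem_range] at hj
    rcases hs : r - j with _|s
    · -- j = r : only k = m+1 contributes
      have hjr : j = r := by omega
      rw [Finset.sum_eq_single_of_mem (m+1) (by simp)]
      · rw [G_zero_right]
        simp [hjr, cb_zero]
      · intro k hk hkne
        simp only [Finset.mem_Icc] at hk
        rw [G_zero_right]
        have : m + 1 - k ≠ 0 := by omega
        simp [this]
    · -- r - j = s + 1
      have hsum : ∀ k ∈ Finset.Icc 1 (m+1),
          (k.choose (j+1) : ℚ) * G X (m+1-k) (s+1)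
          = ((-1:ℚ)^(s+1) * cb X (s+1)) * ((k.choose (j+1) * gn (m+1-k) s : ℕ) : ℚ) := by
        intro k _
        rw [G_succ]
        push_cast
        ring
      rw [Finset.sum_congr rfl hsum, ← Finset.mul_sum, ← Nat.cast_sum, VL m j s]
      have : j + s + 2 = r + 1 := by omega
      rw [this]
      try ring
  rw [Finset.sum_congr rfl key, ← Finset.sum_mul]
  have refl1 : ∑ j ∈ Finset.range (r+1), (-1:ℚ)^(r-j) * cb X (r-j)
      = ∑ s ∈ Finset.range (r+1), (-1:ℚ)^s * cb X s := by
    rw [← Finset.sum_range_reflect (fun s => (-1:ℚ)^s * cb X s) (r+1)]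
    apply Finset.sum_congr rfl
    intro j hj
    congr 2 <;> omega
  rw [refl1, cb_alt]
  -- LHS
  have hq : ((m:ℚ)+1) * (m.choose r : ℚ) = ((m+1).choose (r+1) : ℚ) * ((r:ℚ)+1) := by
    exact_mod_cast Nat.add_one_mul_choose_eq m r
  simp only [G]
  push_cast
  linear_combination ((-1:ℚ)^(r+1) * cb X (r+1)) * hq
    + ((-1:ℚ)^(r+1) * ((m+1).choose (r+1) : ℚ)) * (cb_mul_nat X r)




lemma mem_diagram {l : List ℕ} {c : ℕ × ℕ} :
    c ∈ diagram l ↔ c.1 < l.length ∧ c.2 < l.getD c.1 0 := by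
  simp only [diagram, Finset.mem_biUnion, Finset.mem_range, Finset.mem_image]
  constructor
  · rintro ⟨i, hi, j, hj, rfl⟩; exact ⟨hi, hj⟩
  · rintro ⟨h1, h2⟩; exact ⟨c.1, h1, c.2, h2, rfl⟩

lemma gbc_nil (r : ℕ) : gbc [] r = if r = 0 then 1 else 0 := by
  have hd : diagram [] = ∅ := by
    rw [Finset.eq_empty_iff_forall_notMem]; intro c hc
    rw [mem_diagram] at hc; simp at hc
  rcases r with _|r
  · simp [gbc, hd]
  · rw [gbc, hd]
    rw [Finset.powersetCard_eq_empty.2 (by simp)]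
    simp

lemma gbc_eq_zero_of_lt {l : List ℕ} {r : ℕ} (h : r < l.length) : gbc l r = 0 := by
  rw [gbc, Finset.card_eq_zero, Finset.eq_empty_iff_forall_notMem]
  intro S hS
  simp only [Finset.mem_filter, Finset.mem_powersetCard] at hS
  obtain ⟨⟨hsub, hcard⟩, hgood⟩ := hS
  have hsub2 : Finset.range l.length ⊆ S.image Prod.fst := by
    intro i hi
    obtain ⟨c, hc, hc1⟩ := hgood i hi
    exact Finset.mem_image.2 ⟨c, hc, hc1⟩
  have := (Finset.card_le_card hsub2).trans (Finset.card_image_le)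
  simp [hcard] at this
  omega

def row0 (k : ℕ) : Finset (ℕ × ℕ) := (Finset.range k).image fun j => ((0:ℕ), j)

lemma mem_row0 {k : ℕ} {c : ℕ × ℕ} : c ∈ row0 k ↔ c.1 = 0 ∧ c.2 < k := by
  simp only [row0, Finset.mem_image, Finset.mem_range]
  constructor
  · rintro ⟨j, hj, rfl⟩; exact ⟨rfl, hj⟩
  · rintro ⟨h1, h2⟩; exact ⟨c.2, h2, by rw [Prod.ext_iff]; exact ⟨h1.symm, rfl⟩⟩

lemma card_row0 (k : ℕ) : (row0 k).card = k := by
  rw [row0, Finset.card_image_of_injective _ (fun a b h => by simpa using h), Finset.card_range]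

def shemb : ℕ × ℕ ↪ ℕ × ℕ :=
  ⟨fun c => (c.1 + 1, c.2), by rintro ⟨a1,a2⟩ ⟨b1,b2⟩ h; simpa [Prod.ext_iff] using h⟩

lemma shemb_apply (c : ℕ × ℕ) : shemb c = (c.1 + 1, c.2) := rfl

lemma getD_cons_pred (k : ℕ) (l : List ℕ) {i : ℕ} (h : i ≠ 0) :
    (k :: l).getD i 0 = l.getD (i-1) 0 := by
  rcases i with _|i
  · exact absurd rfl h
  · simp

lemma gbc_cons (k : ℕ) (l : List ℕ) (r : ℕ) :
    gbc (k :: l) r = ∑ j ∈ Finset.Icc 1 r, k.choose j * gbc l (r - j) := by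
  classical
  set good : List ℕ → Finset (ℕ × ℕ) → Prop :=
    fun l' S => ∀ i ∈ Finset.range l'.length, ∃ c ∈ S, c.1 = i with hgooddef
  set T : Finset (Σ _j : ℕ, Finset (ℕ × ℕ) × Finset (ℕ × ℕ)) :=
    (Finset.Icc 1 r).sigma (fun j => ((row0 k).powersetCard j) ×ˢ
      (((diagram l).powersetCard (r - j)).filter (good l))) with hT
  have hcardT : T.card = ∑ j ∈ Finset.Icc 1 r, k.choose j * gbc l (r - j) := by
    rw [hT, Finset.card_sigma]
    apply Finset.sum_congr rfl
    intro j _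
    rw [Finset.card_product, Finset.card_powersetCard, card_row0]
    rfl
  rw [← hcardT, gbc]
  symm
  refine Finset.card_bij'
    (i := fun x _ => x.2.1 ∪ x.2.2.map shemb)
    (j := fun S _ => ⟨(S.filter (fun c => c.1 = 0)).card,
      (S.filter (fun c => c.1 = 0), (S.filter (fun c => c.1 ≠ 0)).image (fun c => (c.1 - 1, c.2)))⟩)
    ?hi ?hj ?li ?ri
  -- hi : forward maps into filtered set
  case hi =>
    rintro ⟨j, A, B⟩ hx
    simp only [hT, Finset.mem_sigma, Finset.mem_Icc, Finset.mem_product, Finset.mem_filter,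
      Finset.mem_powersetCard] at hx
    obtain ⟨⟨hj1, hjr⟩, ⟨hA, hAcard⟩, ⟨⟨hB, hBcard⟩, hBgood⟩⟩ := hx
    have hdisj : Disjoint A (B.map shemb) := by
      rw [Finset.disjoint_left]
      intro c hcA hcB
      have h0 : c.1 = 0 := (mem_row0.1 (hA hcA)).1
      obtain ⟨b, _, hb⟩ := Finset.mem_map.1 hcB
      rw [← hb] at h0
      simp [shemb] at h0
    simp only [Finset.mem_filter, Finset.mem_powersetCard]
    refine ⟨⟨?_, ?_⟩, ?_⟩
    · -- subset of diagram (k :: l)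
      intro c hc
      rcases Finset.mem_union.1 hc with hc | hc
      · have := mem_row0.1 (hA hc)
        rw [mem_diagram]
        constructor
        · simp [this.1]
        · rw [this.1]; simpa using this.2
      · obtain ⟨b, hbB, rfl⟩ := Finset.mem_map.1 hc
        have := mem_diagram.1 (hB hbB)
        rw [mem_diagram]
        constructor
        · simp only [shemb_apply, List.length_cons]; omega
        · simpa [shemb_apply] using this.2
    · rw [Finset.card_union_of_disjoint hdisj, Finset.card_map, hAcard, hBcard]; omega
    · -- goodness
      intro i hi
      simp only [Finset.mem_range, List.length_cons] at hi
      rcases i with _|i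
      · have hAne : A.Nonempty := by
          rw [← Finset.card_pos, hAcard]; omega
        obtain ⟨a, ha⟩ := hAne
        exact ⟨a, Finset.mem_union_left _ ha, (mem_row0.1 (hA ha)).1⟩
      · obtain ⟨c, hcB, hc1⟩ := hBgood i (Finset.mem_range.2 (by omega))
        exact ⟨shemb c, Finset.mem_union_right _ (Finset.mem_map_of_mem _ hcB),
          by simp [shemb_apply, hc1]⟩
  -- hj : backward maps into T
  case hj =>
    intro S hS
    simp only [Finset.mem_filter, Finset.mem_powersetCard] at hS
    obtain ⟨⟨hsub, hcard⟩, hgood⟩ := hS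
    have hAsub : ∀ c ∈ S.filter (fun c => c.1 = 0), c ∈ row0 k := by
      intro c hc
      obtain ⟨hcS, hc0⟩ := Finset.mem_filter.1 hc
      have := mem_diagram.1 (hsub hcS)
      rw [mem_row0]
      exact ⟨hc0, by rw [hc0] at this; simpa using this.2⟩
    have hApos : 0 < (S.filter (fun c => c.1 = 0)).card := by
      rw [Finset.card_pos]
      obtain ⟨c, hcS, hc0⟩ := hgood 0 (by simp)
      exact ⟨c, Finset.mem_filter.2 ⟨hcS, hc0⟩⟩
    have hinj : Set.InjOn (fun c : ℕ × ℕ => (c.1 - 1, c.2)) (S.filter (fun c => c.1 ≠ 0)) := by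
      intro a ha b hb hab
      obtain ⟨_, ha0⟩ := Finset.mem_filter.1 ha
      obtain ⟨_, hb0⟩ := Finset.mem_filter.1 hb
      rw [Prod.ext_iff] at hab ⊢
      simp only at hab
      obtain ⟨h1, h2⟩ := hab
      exact ⟨by omega, h2⟩
    have hBcard : ((S.filter (fun c => c.1 ≠ 0)).image (fun c => (c.1 - 1, c.2))).card
        = r - (S.filter (fun c => c.1 = 0)).card := by
      rw [Finset.card_image_of_injOn hinj]
      have := Finset.card_filter_add_card_filter_not (s := S)
        (p := fun c : ℕ × ℕ => c.1 = 0)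
      simp only [hcard, ne_eq] at this ⊢
      have hle : (S.filter (fun c => c.1 = 0)).card ≤ r := by
        rw [← hcard]; exact Finset.card_filter_le _ _
      omega
    simp only [hT, Finset.mem_sigma, Finset.mem_Icc, Finset.mem_product, Finset.mem_filter,
      Finset.mem_powersetCard]
    refine ⟨⟨hApos, ?_⟩, ⟨fun c hc => hAsub c hc, trivial⟩, ⟨?_, hBcard⟩, ?_⟩
    · rw [← hcard]; exact Finset.card_filter_le _ _
    · -- B ⊆ diagram l
      intro c hc
      obtain ⟨b, hb, rfl⟩ := Finset.mem_image.1 hc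
      obtain ⟨hbS, hb0⟩ := Finset.mem_filter.1 hb
      have := mem_diagram.1 (hsub hbS)
      rw [mem_diagram]
      simp only [List.length_cons] at this
      constructor
      · simp; omega
      · have h2 := this.2
        rw [getD_cons_pred _ _ hb0] at h2
        exact h2
    · -- goodness of B
      intro i hi
      simp only [Finset.mem_range] at hi
      obtain ⟨c, hcS, hc1⟩ := hgood (i+1) (by simp; omega)
      refine ⟨(c.1 - 1, c.2), Finset.mem_image.2 ⟨c, Finset.mem_filter.2 ⟨hcS, by omega⟩, rfl⟩, ?_⟩
      simp [hc1]
  -- left inverse : backward (forward x) = x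
  case li =>
    rintro ⟨j, A, B⟩ hx
    simp only [hT, Finset.mem_sigma, Finset.mem_Icc, Finset.mem_product, Finset.mem_filter,
      Finset.mem_powersetCard] at hx
    obtain ⟨⟨hj1, hjr⟩, ⟨hA, hAcard⟩, ⟨⟨hB, hBcard⟩, hBgood⟩⟩ := hx
    have hfA : (A ∪ B.map shemb).filter (fun c => c.1 = 0) = A := by
      rw [Finset.filter_union]
      have h1 : A.filter (fun c => c.1 = 0) = A :=
        Finset.filter_true_of_mem (fun c hc => (mem_row0.1 (hA hc)).1)
      have h2 : (B.map shemb).filter (fun c => c.1 = 0) = ∅ := by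
        rw [Finset.filter_eq_empty_iff]
        rintro c hc
        obtain ⟨b, _, rfl⟩ := Finset.mem_map.1 hc
        simp [shemb]
      rw [h1, h2, Finset.union_empty]
    have hfB : (A ∪ B.map shemb).filter (fun c => c.1 ≠ 0) = B.map shemb := by
      rw [Finset.filter_union]
      have h1 : A.filter (fun c => c.1 ≠ 0) = ∅ := by
        rw [Finset.filter_eq_empty_iff]
        intro c hc
        simp [(mem_row0.1 (hA hc)).1]
      have h2 : (B.map shemb).filter (fun c => c.1 ≠ 0) = B.map shemb := by
        apply Finset.filter_true_of_mem
        rintro c hc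
        obtain ⟨b, _, rfl⟩ := Finset.mem_map.1 hc
        simp [shemb]
      rw [h1, h2, Finset.empty_union]
    have hfB2 : ((A ∪ B.map shemb).filter (fun c => c.1 ≠ 0)).image (fun c => (c.1 - 1, c.2)) = B := by
      rw [hfB]
      ext b
      simp only [Finset.mem_image, Finset.mem_map]
      constructor
      · rintro ⟨c, ⟨b', hb', rfl⟩, rfl⟩
        simpa [shemb_apply] using hb'
      · intro hb
        exact ⟨shemb b, ⟨b, hb, rfl⟩, by simp [shemb_apply]⟩
    simp only [hfA, hfB2, hAcard]
  -- right inverse : forward (backward S) = S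
  case ri =>
    intro S hS
    simp only [Finset.mem_filter, Finset.mem_powersetCard] at hS
    obtain ⟨⟨hsub, hcard⟩, hgood⟩ := hS
    show (S.filter (fun c => c.1 = 0)) ∪
      ((S.filter (fun c => c.1 ≠ 0)).image (fun c => (c.1 - 1, c.2))).map shemb = S
    have hmap : ((S.filter (fun c => c.1 ≠ 0)).image (fun c => (c.1 - 1, c.2))).map shemb
        = S.filter (fun c => c.1 ≠ 0) := by
      ext c
      simp only [Finset.mem_map, Finset.mem_image]
      constructor
      · rintro ⟨b, ⟨c', hc', rfl⟩, rfl⟩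
        obtain ⟨hcS, hc0⟩ := Finset.mem_filter.1 hc'
        have : shemb (c'.1 - 1, c'.2) = c' := by
          rw [Prod.ext_iff]; constructor
          · show c'.1 - 1 + 1 = c'.1; omega
          · rfl
        rw [this]
        exact hc'
      · intro hc
        obtain ⟨hcS, hc0⟩ := Finset.mem_filter.1 hc
        refine ⟨(c.1 - 1, c.2), ⟨c, hc, rfl⟩, ?_⟩
        rw [Prod.ext_iff]; constructor
        · show c.1 - 1 + 1 = c.1; omega
        · rfl
    rw [hmap, Finset.filter_union_filter_not_eq]


-- previously proven (axioms here for speed)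

noncomputable def pol (m : Multiset ℕ) : Polynomial ℚ :=
  (m.map (fun i => (1 + Polynomial.X)^i - 1)).prod

noncomputable def gbcQ (m : Multiset ℕ) (r : ℕ) : ℚ := (pol m).coeff r

lemma pol_cons (k : ℕ) (m : Multiset ℕ) :
    pol (k ::ₘ m) = ((1 + Polynomial.X)^k - 1) * pol m := by
  simp [pol, Multiset.map_cons, Multiset.prod_cons]

lemma coeff_f (k j : ℕ) :
    ((1 + Polynomial.X : Polynomial ℚ)^k - 1).coeff j
      = (k.choose j : ℚ) - if j = 0 then 1 else 0 := by
  rw [Polynomial.coeff_sub, Polynomial.coeff_one_add_X_pow]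
  congr 1
  simp [Polynomial.coeff_one]

lemma gbcQ_zero (r : ℕ) : gbcQ 0 r = if r = 0 then 1 else 0 := by
  simp only [gbcQ, pol, Multiset.map_zero, Multiset.prod_zero, Polynomial.coeff_one]

lemma gbcQ_cons (k : ℕ) (m : Multiset ℕ) (r : ℕ) :
    gbcQ (k ::ₘ m) r
      = (∑ j ∈ Finset.range (r+1), (k.choose j : ℚ) * gbcQ m (r - j)) - gbcQ m r := by
  rw [gbcQ, pol_cons, Polynomial.coeff_mul,
    Finset.Nat.sum_antidiagonal_eq_sum_range_succ_mk]
  have : ∀ j ∈ Finset.range (r+1),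
      ((1 + Polynomial.X : Polynomial ℚ)^k - 1).coeff j * (pol m).coeff (r - j)
      = (k.choose j : ℚ) * gbcQ m (r-j) - (if j = 0 then 1 else 0) * gbcQ m (r-j) := by
    intro j _
    rw [coeff_f]
    ring_nf
    rfl
  rw [Finset.sum_congr rfl this, Finset.sum_sub_distrib]
  congr 1
  rw [Finset.sum_eq_single_of_mem 0 (by simp)]
  · simp
  · intro j _ hj; simp [hj]

lemma gbcQ_cons' (k : ℕ) (m : Multiset ℕ) (r : ℕ) :
    gbcQ (k ::ₘ m) r = ∑ j ∈ Finset.Icc 1 r, (k.choose j : ℚ) * gbcQ m (r - j) := by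
  rw [gbcQ_cons]
  rw [Finset.sum_range_succ' (fun j => (k.choose j : ℚ) * gbcQ m (r - j)) r]
  simp only [Nat.choose_zero_right, Nat.cast_one, one_mul, Nat.sub_zero, add_sub_cancel_right]
  rw [← Finset.Ico_add_one_right_eq_Icc, Finset.sum_Ico_eq_sum_range]
  apply Finset.sum_congr (by congr 1)
  intro j _
  rw [add_comm 1 j]

lemma gbc_eq_gbcQ (l : List ℕ) (r : ℕ) : (gbc l r : ℚ) = gbcQ (↑l) r := by
  induction l generalizing r with
  | nil =>
    rw [gbc_nil, show ((([] : List ℕ) : Multiset ℕ)) = 0 from rfl, gbcQ_zero]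
    split <;> simp
  | cons k l ih =>
    rw [gbc_cons, show ((k :: l : List ℕ) : Multiset ℕ) = k ::ₘ ↑l from rfl, gbcQ_cons']
    push_cast
    exact Finset.sum_congr rfl (fun j _ => by rw [ih])

-- zM
def zM (m : Multiset ℕ) : ℕ :=
  ∏ i ∈ m.toFinset, i ^ m.count i * (m.count i).factorial

lemma zM_cons (k : ℕ) (m : Multiset ℕ) :
    zM (k ::ₘ m) = (k * (m.count k + 1)) * zM m := by
  classical
  by_cases hk : k ∈ m.toFinset
  · rw [zM, Multiset.toFinset_cons, Finset.insert_eq_self.2 hk]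
    rw [← Finset.mul_prod_erase _ _ hk]
    rw [zM, ← Finset.mul_prod_erase _ _ hk]
    have h1 : (k ::ₘ m).count k = m.count k + 1 := Multiset.count_cons_self k m
    have h2 : ∀ i ∈ m.toFinset.erase k,
        i ^ (k ::ₘ m).count i * ((k ::ₘ m).count i).factorial
          = i ^ m.count i * (m.count i).factorial := by
      intro i hi
      rw [Multiset.count_cons_of_ne (Finset.ne_of_mem_erase hi) m]
    rw [Finset.prod_congr rfl h2, h1, pow_succ, Nat.factorial_succ]
    ring
  · have hc : m.count k = 0 := by
      rw [Multiset.count_eq_zero]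
      exact fun h => hk (Multiset.mem_toFinset.2 h)
    rw [zM, Multiset.toFinset_cons, Finset.prod_insert hk]
    have h1 : (k ::ₘ m).count k = 1 := by rw [Multiset.count_cons_self, hc]
    have h2 : ∀ i ∈ m.toFinset,
        i ^ (k ::ₘ m).count i * ((k ::ₘ m).count i).factorial
          = i ^ m.count i * (m.count i).factorial := by
      intro i hi
      have : i ≠ k := fun h => hk (h ▸ hi)
      rw [Multiset.count_cons_of_ne this m]
    rw [Finset.prod_congr rfl h2, h1, hc]
    simp [zM]

lemma zM_pos (m : Multiset ℕ) (h : ∀ i ∈ m, 0 < i) : 0 < zM m := by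
  apply Finset.prod_pos
  intro i hi
  have := h i (Multiset.mem_toFinset.1 hi)
  positivity



def erasePart {n : ℕ} (μ : n.Partition) (p : ℕ) (hp : p ∈ μ.parts) : (n - p).Partition where
  parts := μ.parts.erase p
  parts_pos := fun hj => μ.parts_pos (Multiset.mem_of_mem_erase hj)
  parts_sum := by
    have h1 := Multiset.cons_erase hp
    have h2 := μ.parts_sum
    have h3 : (p ::ₘ μ.parts.erase p).sum = p + (μ.parts.erase p).sum := Multiset.sum_cons p _
    rw [h1, h2] at h3
    omega

def consPart {n : ℕ} (k : ℕ) (hk : 1 ≤ k) (hkn : k ≤ n) (ν : (n - k).Partition) : n.Partition where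
  parts := k ::ₘ ν.parts
  parts_pos := fun hj => by
    rcases Multiset.mem_cons.1 hj with h | h
    · omega
    · exact ν.parts_pos h
  parts_sum := by rw [Multiset.sum_cons, ν.parts_sum]; omega

noncomputable def W (X : ℚ) (n : ℕ) (r : ℕ) : ℚ :=
  ∑ μ : n.Partition, (-X)^(Multiset.card μ.parts) * gbcQ μ.parts r / (zM μ.parts)

lemma cast_msum (m : Multiset ℕ) : ((m.map ((Nat.cast : ℕ → ℚ))).sum) = (m.sum : ℚ) := by
  induction m using Multiset.induction_on with
  | empty => simp
  | cons a s ih =>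
    rw [Multiset.map_cons, Multiset.sum_cons, Multiset.sum_cons, ih]
    push_cast
    ring

lemma Wrec (X : ℚ) (n r : ℕ) :
    (n:ℚ) * W X n r
      = -X * ∑ k ∈ Finset.Icc 1 n,
          ((∑ j ∈ Finset.range (r+1), (k.choose j : ℚ) * W X (n-k) (r-j)) - W X (n-k) r) := by
  classical
  have inner : ∀ k ∈ Finset.Icc 1 n,
      (∑ j ∈ Finset.range (r+1), (k.choose j : ℚ) * W X (n-k) (r-j)) - W X (n-k) r
      = ∑ ν : (n-k).Partition,
          (-X)^(Multiset.card ν.parts) * gbcQ (k ::ₘ ν.parts) r / (zM ν.parts) := by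
    intro k _
    have h1 : ∀ j, (k.choose j : ℚ) * W X (n-k) (r-j)
        = ∑ ν : (n-k).Partition,
            (-X)^(Multiset.card ν.parts) * ((k.choose j : ℚ) * gbcQ ν.parts (r-j)) / (zM ν.parts) := by
      intro j
      rw [W, Finset.mul_sum]
      exact Finset.sum_congr rfl (fun ν _ => by ring)
    simp only [h1]
    rw [Finset.sum_comm, W, ← Finset.sum_sub_distrib]
    apply Finset.sum_congr rfl
    intro ν _
    rw [gbcQ_cons]
    have h2 : ∀ j ∈ Finset.range (r+1),
        (-X)^(Multiset.card ν.parts) * ((k.choose j : ℚ) * gbcQ ν.parts (r-j)) / (zM ν.parts)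
        = (-X)^(Multiset.card ν.parts) / (zM ν.parts) * ((k.choose j : ℚ) * gbcQ ν.parts (r-j)) := by
      intro j _; ring
    rw [Finset.sum_congr rfl h2, ← Finset.mul_sum]
    ring
  rw [Finset.sum_congr rfl inner]
  have hR : -X * (∑ k ∈ Finset.Icc 1 n, ∑ ν : (n-k).Partition,
        (-X)^(Multiset.card ν.parts) * gbcQ (k ::ₘ ν.parts) r / (zM ν.parts))
      = ∑ k ∈ Finset.Icc 1 n, ∑ ν : (n-k).Partition,
        -X * ((-X)^(Multiset.card ν.parts) * gbcQ (k ::ₘ ν.parts) r / (zM ν.parts)) := by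
    rw [Finset.mul_sum]
    exact Finset.sum_congr rfl (fun k _ => Finset.mul_sum _ _ _)
  rw [hR]
  have hL : (n:ℚ) * W X n r = ∑ μ : n.Partition, ∑ p ∈ μ.parts.toFinset,
      ((p : ℚ) * (μ.parts.count p : ℚ))
        * ((-X)^(Multiset.card μ.parts) * gbcQ μ.parts r / (zM μ.parts)) := by
    rw [W, Finset.mul_sum]
    apply Finset.sum_congr rfl
    intro μ _
    rw [← Finset.sum_mul]
    congr 1
    have h2 : ((n : ℕ) : ℚ) = ((μ.parts.map ((Nat.cast : ℕ → ℚ))).sum) := by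
      rw [cast_msum, μ.parts_sum]
    rw [h2, Finset.sum_multiset_map_count μ.parts ((Nat.cast : ℕ → ℚ))]
    apply Finset.sum_congr rfl
    intro i _
    simp only [nsmul_eq_mul]
    ring
  rw [hL, Finset.sum_sigma', Finset.sum_sigma']
  refine Finset.sum_bij'
    (i := fun (x : Σ _μ : n.Partition, ℕ) hx =>
      (⟨x.2, erasePart x.1 x.2 (Multiset.mem_toFinset.1 (Finset.mem_sigma.1 hx).2)⟩
        : Σ k : ℕ, (n - k).Partition))
    (j := fun (y : Σ k : ℕ, (n - k).Partition) hy =>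
      (⟨consPart y.1 (Finset.mem_Icc.1 (Finset.mem_sigma.1 hy).1).1
          (Finset.mem_Icc.1 (Finset.mem_sigma.1 hy).1).2 y.2, y.1⟩
        : Σ _μ : n.Partition, ℕ))
    ?_ ?_ ?_ ?_ ?_
  · -- hi
    rintro ⟨μ, p⟩ hx
    have hp : p ∈ μ.parts := Multiset.mem_toFinset.1 (Finset.mem_sigma.1 hx).2
    refine Finset.mem_sigma.2 ⟨?_, Finset.mem_univ _⟩
    show p ∈ Finset.Icc 1 n
    refine Finset.mem_Icc.2 ⟨μ.parts_pos hp, ?_⟩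
    have h1 := Multiset.cons_erase hp
    have h2 := μ.parts_sum
    have h3 : (p ::ₘ μ.parts.erase p).sum = p + (μ.parts.erase p).sum := Multiset.sum_cons p _
    rw [h1, h2] at h3
    omega
  · -- hj
    rintro ⟨k, ν⟩ hy
    dsimp only
    rw [Finset.mem_sigma]
    exact ⟨Finset.mem_univ _, Multiset.mem_toFinset.2 (Multiset.mem_cons_self _ _)⟩
  · -- left_inv
    rintro ⟨μ, p⟩ hx
    dsimp only
    have hp : p ∈ μ.parts := Multiset.mem_toFinset.1 (Finset.mem_sigma.1 hx).2
    apply Sigma.ext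
    · apply Nat.Partition.ext
      show p ::ₘ μ.parts.erase p = μ.parts
      exact Multiset.cons_erase hp
    · rfl
  · -- right_inv
    rintro ⟨k, ν⟩ hy
    dsimp only
    apply Sigma.ext
    · rfl
    · apply heq_of_eq
      apply Nat.Partition.ext
      show (k ::ₘ ν.parts).erase k = ν.parts
      exact Multiset.erase_cons_head k ν.parts
  · -- values
    rintro ⟨μ, p⟩ hx
    have hp : p ∈ μ.parts := Multiset.mem_toFinset.1 (Finset.mem_sigma.1 hx).2
    show ((p : ℚ) * (μ.parts.count p : ℚ))
        * ((-X)^(Multiset.card μ.parts) * gbcQ μ.parts r / (zM μ.parts))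
      = -X * ((-X)^(Multiset.card (μ.parts.erase p)) * gbcQ (p ::ₘ μ.parts.erase p) r
          / (zM (μ.parts.erase p)))
    have hce := Multiset.cons_erase hp
    rw [hce]
    have hcount : μ.parts.count p = (μ.parts.erase p).count p + 1 := by
      conv_lhs => rw [← hce]
      rw [Multiset.count_cons_self]
    have hcard : Multiset.card μ.parts = Multiset.card (μ.parts.erase p) + 1 := by
      conv_lhs => rw [← hce]
      rw [Multiset.card_cons]
    have hzm : (zM μ.parts : ℚ) = (p * ((μ.parts.erase p).count p + 1) * zM (μ.parts.erase p) : ℕ) := by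
      conv_lhs => rw [← hce]
      rw [zM_cons]
    have hzpos : 0 < zM (μ.parts.erase p) :=
      zM_pos _ (fun i hi => μ.parts_pos (Multiset.mem_of_mem_erase hi))
    have hppos : 0 < p := μ.parts_pos hp
    rw [hcount, hcard, hzm]
    have hz : ((zM (μ.parts.erase p) : ℕ) : ℚ) ≠ 0 := by positivity
    have hpq : (p:ℚ) ≠ 0 := by positivity
    have hcq : (((μ.parts.erase p).count p : ℚ) + 1) ≠ 0 := by positivity
    push_cast
    rw [pow_succ]
    field_simp



lemma parts_zero (μ : Nat.Partition 0) : μ.parts = 0 := by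
  rw [Multiset.eq_zero_iff_forall_notMem]
  intro a ha
  have h1 := μ.parts_pos ha
  have h2 := μ.parts_sum
  have := Multiset.single_le_sum (fun x _ => Nat.zero_le x) a ha
  omega

lemma W_zero (X : ℚ) (r : ℕ) : W X 0 r = if r = 0 then 1 else 0 := by
  rw [W]
  rw [Finset.univ_unique, Finset.sum_singleton]
  rw [parts_zero (default : Nat.Partition 0)]
  simp [gbcQ_zero, zM]

lemma W_eq_G (X : ℚ) : ∀ n r, W X n r = G X n r := by
  intro n
  induction n using Nat.strong_induction_on with
  | _ n ih =>
    intro r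
    rcases n with _|m
    · rw [W_zero]
      rcases r with _|r <;> simp [G]
    · have h := Wrec X (m+1) r
      have hinner : ∀ k ∈ Finset.Icc 1 (m+1),
          ((∑ j ∈ Finset.range (r+1), (k.choose j : ℚ) * W X (m+1-k) (r-j)) - W X (m+1-k) r)
          = ((∑ j ∈ Finset.range (r+1), (k.choose j : ℚ) * G X (m+1-k) (r-j)) - G X (m+1-k) r) := by
        intro k hk
        simp only [Finset.mem_Icc] at hk
        have hlt : m+1-k < m+1 := by omega
        rw [ih _ hlt]
        congr 1
        exact Finset.sum_congr rfl (fun j _ => by rw [ih _ hlt])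
      rw [Finset.sum_congr rfl hinner, ← Grec X (m+1) r (by omega)] at h
      have hm : (((m+1 : ℕ)) : ℚ) ≠ 0 := by positivity
      exact mul_left_cancel₀ hm h


theorem stmt6 (n r : ℕ) (hn : 1 ≤ n) (hr : 1 ≤ r) (X : ℚ) :
    ∑ μ : n.Partition, (-1 : ℚ) ^ (r - μ.parts.card) * (gbcP μ r : ℚ) / zMu μ
        * X ^ μ.parts.card
      = ((n - 1).choose (r - 1) : ℚ) * cb X r := by
  have hbridge : ∀ (μ : n.Partition), (gbcP μ r : ℚ) = gbcQ μ.parts r := by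
    intro μ
    rw [gbcP, gbc_eq_gbcQ]
    congr 1
    exact Multiset.sort_eq _ _
  have hterm : ∀ μ : n.Partition,
      (-1:ℚ)^(r - Multiset.card μ.parts) * (gbcP μ r : ℚ) / (zMu μ) * X^(Multiset.card μ.parts)
      = (-1:ℚ)^r * ((-X)^(Multiset.card μ.parts) * gbcQ μ.parts r / (zM μ.parts)) := by
    intro μ
    have hz : (zMu μ : ℚ) = (zM μ.parts : ℚ) := rfl
    by_cases hlr : Multiset.card μ.parts ≤ r
    · have h1 : (-1:ℚ)^(r - Multiset.card μ.parts)
          = (-1:ℚ)^r * (-1:ℚ)^(Multiset.card μ.parts) := by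
        rw [← pow_add,
          show r + Multiset.card μ.parts = (r - Multiset.card μ.parts) + 2 * Multiset.card μ.parts
            from by omega, pow_add, pow_mul]
        norm_num
      rw [hz, hbridge, h1, neg_pow X]
      ring
    · have hv : gbc (μ.parts.sort (· ≥ ·)) r = 0 :=
        gbc_eq_zero_of_lt (by rw [Multiset.length_sort]; omega)
      have hv2 : gbcQ μ.parts r = 0 := by
        rw [← hbridge μ, gbcP, hv, Nat.cast_zero]
      rw [gbcP, hv, hv2]
      simp
  rw [Finset.sum_congr rfl (fun μ _ => hterm μ), ← Finset.mul_sum]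
  have hW : ∑ μ : n.Partition, (-X)^(Multiset.card μ.parts) * gbcQ μ.parts r / (zM μ.parts)
      = W X n r := rfl
  rw [hW, W_eq_G]
  obtain ⟨m, rfl⟩ : ∃ m, n = m + 1 := ⟨n - 1, by omega⟩
  obtain ⟨s, rfl⟩ : ∃ s, r = s + 1 := ⟨r - 1, by omega⟩
  simp only [G, Nat.add_sub_cancel]
  have h2 : (-1:ℚ)^(s+1) * (-1:ℚ)^(s+1) = 1 := by
    rw [← pow_add, show (s+1) + (s+1) = 2 * (s+1) from by ring, pow_mul]
    norm_num
  calc (-1:ℚ)^(s+1) * ((-1:ℚ)^(s+1) * ((m.choose s : ℕ) : ℚ) * cb X (s+1))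
      = ((-1:ℚ)^(s+1) * (-1:ℚ)^(s+1)) * (((m.choose s : ℕ) : ℚ) * cb X (s+1)) := by ring
    _ = ((m.choose s : ℕ) : ℚ) * cb X (s+1) := by rw [h2, one_mul]
end

section
/- For all integers n, r, s ≥ 1: (r-1)! times the sum over partitions μ of n with exactly r parts of (∑_{i≥1} m_i(μ)(i)_s) / (∏_{i≥1} m_i(μ)!) equals s! C(n+s-1, n-r). -/
open Finset

section Aux

-- hockey stick / Vandermonde triangle pieces
lemma hsP (p : ℕ) : ∀ M, ∑ i ∈ Finset.range (M+1), (i+p).choose p = (M+p+1).choose (p+1) := by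
  intro M
  induction M with
  | zero => simp
  | succ M ih =>
    rw [Finset.sum_range_succ, ih, show M+1+p = M+p+1 by omega,
      Nat.choose_succ_succ (M+p+1) p]
    simp only [Nat.succ_eq_add_one]
    omega

lemma hsGen (q : ℕ) : ∀ M, ∑ i ∈ Finset.range M, i.choose q = M.choose (q+1) := by
  intro M
  induction M with
  | zero => simp
  | succ M ih =>
    rw [Finset.sum_range_succ, ih, Nat.choose_succ_succ M q]
    simp only [Nat.succ_eq_add_one]
    omega

lemma vtri (p : ℕ) : ∀ q M, ∑ i ∈ Finset.range (M+1), (i+p).choose p * (M-i).choose q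
    = (M+p+1).choose (p+q+1) := by
  intro q
  induction q with
  | zero => intro M; simpa using hsP p M
  | succ q ihq =>
    intro M
    induction M with
    | zero =>
      simp only [Finset.sum_range_one, Nat.zero_add, Nat.zero_sub, Nat.sub_zero,
        Nat.choose_self, Nat.zero_add]
      exact (Nat.choose_eq_zero_of_lt (by omega)).symm
    | succ M ihM =>
      have key : ∀ i ∈ Finset.range (M+1),
          (i+p).choose p * (M+1-i).choose (q+1)
            = (i+p).choose p * (M-i).choose q + (i+p).choose p * (M-i).choose (q+1) := by
        intro i hi
        have hiM : i ≤ M := Nat.lt_succ_iff.1 (Finset.mem_range.1 hi)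
        rw [show M+1-i = (M-i)+1 by omega, Nat.choose_succ_succ, Nat.mul_add]
      rw [Finset.sum_range_succ, Finset.sum_congr rfl key, Finset.sum_add_distrib,
        ihq M, ihM, Nat.sub_self, Nat.choose_eq_zero_of_lt (show 0 < q+1 by omega),
        Nat.mul_zero, Nat.add_zero, show M+1+p+1 = M+p+1+1 by omega,
        show p+(q+1)+1 = p+q+1+1 by omega, Nat.choose_succ_succ (M+p+1) (p+q+1)]
      all_goals simp only [Nat.succ_eq_add_one]
      all_goals omega

lemma asc_ascFactorial (a s : ℕ) : asc a s = a.ascFactorial s := by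
  induction s with
  | zero => simp [asc]
  | succ s ih => rw [asc, Finset.prod_range_succ, ← asc, ih, Nat.ascFactorial_succ]; ring

lemma asc_eq_choose (a s : ℕ) : asc a s = s.factorial * (a+s-1).choose s := by
  rw [asc_ascFactorial, Nat.ascFactorial_eq_factorial_mul_choose']

def prodFac (m : Multiset ℕ) : ℚ := ∏ i ∈ m.toFinset, ((m.count i).factorial : ℚ)

lemma prodFac_pos (m : Multiset ℕ) : 0 < prodFac m :=
  Finset.prod_pos fun i _ => by positivity

lemma prodFac_ne_zero (m : Multiset ℕ) : prodFac m ≠ 0 := (prodFac_pos m).ne'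

lemma prodFac_cons (a : ℕ) (m : Multiset ℕ) :
    prodFac (a ::ₘ m) = (m.count a + 1) * prodFac m := by
  classical
  by_cases h : a ∈ m
  · have ha : a ∈ m.toFinset := Multiset.mem_toFinset.2 h
    rw [prodFac, prodFac, Multiset.toFinset_cons, Finset.insert_eq_self.2 ha,
      ← Finset.mul_prod_erase _ _ ha, ← Finset.mul_prod_erase _ _ ha]
    have he : ∀ i ∈ m.toFinset.erase a,
        (((a ::ₘ m).count i).factorial : ℚ) = ((m.count i).factorial : ℚ) := by
      intro i hi
      rw [Multiset.count_cons_of_ne (Finset.ne_of_mem_erase hi)]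
    rw [Finset.prod_congr rfl he, Multiset.count_cons_self, Nat.factorial_succ]
    push_cast
    ring
  · have ha : a ∉ m.toFinset := fun hc => h (Multiset.mem_toFinset.1 hc)
    have hc0 : m.count a = 0 := Multiset.count_eq_zero.2 h
    rw [prodFac, prodFac, Multiset.toFinset_cons, Finset.prod_insert ha]
    have he : ∀ i ∈ m.toFinset,
        (((a ::ₘ m).count i).factorial : ℚ) = ((m.count i).factorial : ℚ) := by
      intro i hi
      rw [Multiset.count_cons_of_ne]
      rintro rfl; exact ha hi
    rw [Finset.prod_congr rfl he, Multiset.count_cons_self, hc0]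
    norm_num

def pparts (n k : ℕ) : Finset (Multiset ℕ) :=
  (Finset.univ.filter fun μ : n.Partition => μ.parts.card = k).image fun μ => μ.parts

lemma mem_pparts {n k : ℕ} {m : Multiset ℕ} :
    m ∈ pparts n k ↔ (∀ i ∈ m, 0 < i) ∧ m.sum = n ∧ Multiset.card m = k := by
  constructor
  · intro hm
    simp only [pparts, Finset.mem_image, Finset.mem_filter] at hm
    obtain ⟨μ, ⟨_, hcard⟩, rfl⟩ := hm
    exact ⟨fun i hi => μ.parts_pos hi, μ.parts_sum, hcard⟩
  · rintro ⟨h1, h2, h3⟩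
    simp only [pparts, Finset.mem_image, Finset.mem_filter]
    exact ⟨⟨m, fun {i} hi => h1 i hi, h2⟩, ⟨Finset.mem_univ _, h3⟩, rfl⟩

lemma core (n j : ℕ) (f : ℕ → ℚ) :
    ∑ m ∈ pparts n (j + 1), (m.map f).sum / prodFac m
      = ∑ a ∈ Finset.Icc 1 n, f a * ∑ m ∈ pparts (n - a) j, 1 / prodFac m := by
  classical
  have hL : ∑ m ∈ pparts n (j + 1), (m.map f).sum / prodFac m
      = ∑ m ∈ pparts n (j + 1), ∑ i ∈ m.toFinset, (m.count i : ℚ) * f i / prodFac m := by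
    refine Finset.sum_congr rfl fun m _ => ?_
    rw [Finset.sum_multiset_map_count, Finset.sum_div]
    simp [nsmul_eq_mul]
  have hR : ∑ a ∈ Finset.Icc 1 n, f a * ∑ m ∈ pparts (n - a) j, 1 / prodFac m
      = ∑ a ∈ Finset.Icc 1 n, ∑ m ∈ pparts (n - a) j, f a / prodFac m := by
    refine Finset.sum_congr rfl fun a _ => ?_
    rw [Finset.mul_sum]
    simp [div_eq_mul_inv]
  rw [hL, hR, Finset.sum_sigma' (pparts n (j+1)) (fun m => m.toFinset),
    Finset.sum_sigma' (Finset.Icc 1 n) (fun a => pparts (n - a) j)]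
  refine Finset.sum_nbij' (fun x => ⟨x.2, x.1.erase x.2⟩) (fun y => ⟨y.1 ::ₘ y.2, y.1⟩)
    ?_ ?_ ?_ ?_ ?_
  · rintro ⟨m, a⟩ hx
    dsimp only at hx ⊢
    rw [Finset.mem_sigma] at hx
    obtain ⟨hm, haf⟩ := hx
    rw [mem_pparts] at hm
    obtain ⟨hpos, hsum, hcard⟩ := hm
    have ham : a ∈ m := Multiset.mem_toFinset.1 haf
    have hme : a ::ₘ m.erase a = m := Multiset.cons_erase ham
    have hsume : a + (m.erase a).sum = n := by rw [← Multiset.sum_cons, hme]; exact hsum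
    have ha1 : 1 ≤ a := hpos a ham
    simp only [Finset.mem_sigma, Finset.mem_Icc, mem_pparts]
    refine ⟨⟨ha1, by omega⟩, fun i hi => hpos i (Multiset.mem_of_mem_erase hi), by omega, ?_⟩
    have hce := Multiset.card_erase_of_mem ham
    rw [hce, hcard]
    exact Nat.pred_succ j
  · rintro ⟨a, m⟩ hy
    try dsimp only at hy ⊢
    rw [Finset.mem_sigma, Finset.mem_Icc] at hy
    obtain ⟨⟨ha1, han⟩, hm⟩ := hy
    rw [mem_pparts] at hm
    obtain ⟨hpos, hsum, hcard⟩ := hm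
    have ha1' : 1 ≤ a := ha1
    have han' : a ≤ n := han
    have hsum' : m.sum = n - a := hsum
    have hcard' : Multiset.card m = j := hcard
    simp only [Finset.mem_sigma, mem_pparts]
    try dsimp only
    refine ⟨⟨?_, ?_, ?_⟩, ?_⟩
    · intro i hi
      rcases Multiset.mem_cons.1 hi with rfl | hi
      · omega
      · exact hpos i hi
    · rw [Multiset.sum_cons, hsum']; omega
    · rw [Multiset.card_cons, hcard']
    · exact Multiset.mem_toFinset.2 (Multiset.mem_cons_self a m)
  · rintro ⟨m, a⟩ hx
    dsimp only at hx ⊢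
    rw [Finset.mem_sigma] at hx
    have ham : a ∈ m := Multiset.mem_toFinset.1 hx.2
    simp [Multiset.cons_erase ham]
  · rintro ⟨a, m⟩ _
    simp [Multiset.erase_cons_head]
  · rintro ⟨m, a⟩ hx
    dsimp only at hx ⊢
    rw [Finset.mem_sigma] at hx
    have ham : a ∈ m := Multiset.mem_toFinset.1 hx.2
    have hme : a ::ₘ m.erase a = m := Multiset.cons_erase ham
    have hcount : (m.count a : ℚ) = ((m.erase a).count a : ℚ) + 1 := by
      rw [← hme, Multiset.erase_cons_head, Multiset.count_cons_self]
      push_cast; ring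
    have hpf : prodFac m = (((m.erase a).count a : ℚ) + 1) * prodFac (m.erase a) := by
      conv_lhs => rw [← hme]
      rw [prodFac_cons]
    show (m.count a : ℚ) * f a / prodFac m = f a / prodFac (m.erase a)
    rw [hcount, hpf]
    have hc1 : ((m.erase a).count a : ℚ) + 1 ≠ 0 := Nat.cast_add_one_ne_zero _
    have hp0 : prodFac (m.erase a) ≠ 0 := prodFac_ne_zero _
    field_simp

def Uu (n k : ℕ) : ℚ := ∑ m ∈ pparts n k, 1 / prodFac m

lemma Uu_zero (n : ℕ) : Uu n 0 = if n = 0 then 1 else 0 := by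
  have : pparts n 0 = if n = 0 then {(0 : Multiset ℕ)} else ∅ := by
    ext m
    rw [mem_pparts]
    constructor
    · rintro ⟨h1, h2, h3⟩
      have hm : m = 0 := Multiset.card_eq_zero.1 h3
      subst hm
      simp at h2
      subst h2
      simp
    · intro hm
      split at hm
      · next h =>
        subst h
        rw [Finset.mem_singleton] at hm
        subst hm
        simp
      · simp at hm
  rw [Uu, this]
  split
  · simp [prodFac]
  · simp

lemma Uu_small {n k : ℕ} (h : n < k) : Uu n k = 0 := by
  have : pparts n k = ∅ := by
    rw [Finset.eq_empty_iff_forall_notMem]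
    intro m hm
    rw [mem_pparts] at hm
    obtain ⟨h1, h2, h3⟩ := hm
    have : Multiset.card m • 1 ≤ m.sum := Multiset.card_nsmul_le_sum h1
    simp only [smul_eq_mul, mul_one] at this
    omega
  rw [Uu, this, Finset.sum_empty]

lemma Uu_succ (n j : ℕ) : ((j : ℚ) + 1) * Uu n (j + 1) = ∑ a ∈ Finset.Icc 1 n, Uu (n - a) j := by
  have h := core n j (fun _ => (1 : ℚ))
  have hL : ∑ m ∈ pparts n (j + 1), ((m.map fun _ => (1:ℚ)).sum) / prodFac m
      = ((j : ℚ) + 1) * Uu n (j + 1) := by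
    rw [Uu, Finset.mul_sum]
    refine Finset.sum_congr rfl fun m hm => ?_
    have hc : Multiset.card m = j + 1 := (mem_pparts.1 hm).2.2
    rw [Multiset.map_const', Multiset.sum_replicate, hc]
    push_cast
    ring
  rw [hL] at h
  rw [h]
  refine Finset.sum_congr rfl fun a _ => ?_
  rw [Uu, Finset.mul_sum]
  simp only [one_mul]

lemma Uu_eq : ∀ (j n : ℕ), 1 ≤ n → Uu n (j + 1) = ((n-1).choose j : ℚ) / (j+1).factorial := by
  intro j
  induction j with
  | zero =>
    intro n hn
    have h := Uu_succ n 0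
    norm_num at h ⊢
    rw [h]
    have : ∀ a ∈ Finset.Icc 1 n, Uu (n - a) 0 = if a = n then 1 else 0 := by
      intro a ha
      rw [Finset.mem_Icc] at ha
      rw [Uu_zero]
      by_cases hh : a = n
      · simp [hh]
      · rw [if_neg (by omega), if_neg hh]
    rw [Finset.sum_congr rfl this, Finset.sum_ite_eq' (Finset.Icc 1 n) n (fun _ => (1:ℚ)),
      if_pos (Finset.mem_Icc.2 ⟨hn, le_refl n⟩)]
  | succ j ih =>
    intro n hn
    have h := Uu_succ n (j + 1)
    have hsplit : Finset.Icc 1 n = insert n (Finset.Icc 1 (n-1)) := by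
      ext x
      simp only [Finset.mem_Icc, Finset.mem_insert]
      omega
    have hnot : n ∉ Finset.Icc 1 (n-1) := by
      rw [Finset.mem_Icc]; omega
    rw [hsplit, Finset.sum_insert hnot, Nat.sub_self,
      Uu_small (show 0 < j + 1 from Nat.succ_pos j), zero_add] at h
    have hterm : ∀ a ∈ Finset.Icc 1 (n-1),
        Uu (n - a) (j + 1) = (((n-a-1).choose j : ℕ) : ℚ) / (j+1).factorial := by
      intro a ha
      rw [Finset.mem_Icc] at ha
      exact ih (n - a) (by omega)
    rw [Finset.sum_congr rfl hterm, ← Finset.sum_div, ← Nat.cast_sum] at h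
    have hre : ∑ a ∈ Finset.Icc 1 (n-1), (n-a-1).choose j
        = ∑ i ∈ Finset.range (n-1), i.choose j := by
      refine Finset.sum_nbij' (fun a => n - 1 - a) (fun i => n - 1 - i) ?_ ?_ ?_ ?_ ?_
      · intro a ha
        simp only [Finset.mem_Icc] at ha
        simp only [Finset.mem_range]
        omega
      · intro i hi
        simp only [Finset.mem_range] at hi
        simp only [Finset.mem_Icc]
        omega
      · intro a ha
        simp only [Finset.mem_Icc] at ha
        omega
      · intro i hi
        simp only [Finset.mem_range] at hi
        omega
      · intro a ha
        simp only [Finset.mem_Icc] at ha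
        congr 1
        omega
    rw [hre, hsGen j (n-1)] at h
    have hfac : ((j+1+1).factorial : ℚ) = ((j:ℚ)+1+1) * ((j+1).factorial : ℚ) := by
      rw [Nat.factorial_succ]
      push_cast
      ring
    have hfne : ((j+1).factorial : ℚ) ≠ 0 := by
      exact_mod_cast Nat.cast_ne_zero.2 (j+1).factorial_ne_zero
    have hjne : ((j:ℚ)+1+1) ≠ 0 := by positivity
    rw [hfac, eq_div_iff (by exact mul_ne_zero hjne hfne)]
    field_simp at h
    linear_combination (norm := (push_cast; ring)) h

end Aux

theorem stmt8 (n r s : ℕ) (hn : 1 ≤ n) (hr : 1 ≤ r) (hs : 1 ≤ s) :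
    ((r - 1).factorial : ℚ) *
        ∑ μ ∈ Finset.univ.filter (fun μ : n.Partition => μ.parts.card = r),
          (μ.parts.map fun a => (asc a s : ℚ)).sum /
            ∏ i ∈ μ.parts.toFinset, ((μ.parts.count i).factorial : ℚ)
      = (s.factorial : ℚ) * bin ((n : ℤ) + s - 1) ((n : ℤ) - r) := by
  classical
  obtain ⟨j, rfl⟩ : ∃ j, r = j + 1 := ⟨r - 1, by omega⟩
  have himg : ∑ μ ∈ Finset.univ.filter (fun μ : n.Partition => μ.parts.card = (j+1)),
        (μ.parts.map fun a => (asc a s : ℚ)).sum /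
          ∏ i ∈ μ.parts.toFinset, ((μ.parts.count i).factorial : ℚ)
      = ∑ m ∈ pparts n (j+1), (m.map fun a => (asc a s : ℚ)).sum / prodFac m := by
    rw [pparts, Finset.sum_image (fun μ _ ν _ h => Nat.Partition.ext h)]
    rfl
  rw [himg, core n j (fun a => (asc a s : ℚ))]
  beta_reduce
  rw [show j + 1 - 1 = j by omega]
  rcases Nat.eq_zero_or_pos j with hj0 | hj0
  · subst hj0
    have hterm : ∀ a ∈ Finset.Icc 1 n,
        (asc a s : ℚ) * ∑ m ∈ pparts (n - a) 0, 1 / prodFac m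
          = if a = n then ((asc n s : ℕ) : ℚ) else 0 := by
      intro a ha
      rw [Finset.mem_Icc] at ha
      rw [show (∑ m ∈ pparts (n - a) 0, 1 / prodFac m) = Uu (n - a) 0 from rfl, Uu_zero]
      by_cases hh : a = n
      · subst hh
        rw [if_pos (by omega), if_pos rfl, mul_one]
      · rw [if_neg (by omega), if_neg hh, mul_zero]
    rw [Finset.sum_congr rfl hterm, Finset.sum_ite_eq' (Finset.Icc 1 n) n
      (fun _ => ((asc n s : ℕ) : ℚ)), if_pos (Finset.mem_Icc.2 ⟨hn, le_refl n⟩)]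
    have hb : bin ((n:ℤ) + s - 1) ((n:ℤ) - ((0+1 : ℕ) : ℤ)) = (((n+s-1).choose (n-1) : ℕ) : ℚ) := by
      rw [bin, if_pos (by constructor <;> omega)]
      have h1 : ((n:ℤ) + s - 1).toNat = n + s - 1 := by omega
      have h2 : ((n:ℤ) - ((0+1 : ℕ) : ℤ)).toNat = n - 1 := by omega
      rw [h1, h2]
    rw [hb]
    have hsym : (n+s-1).choose (n-1) = (n+s-1).choose s := by
      rw [← Nat.choose_symm (show (n-1) ≤ n+s-1 by omega)]
      congr 1
      omega
    rw [hsym, asc_eq_choose n s, Nat.factorial_zero]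
    push_cast
    ring
  · obtain ⟨t, rfl⟩ : ∃ t, j = t + 1 := ⟨j - 1, by omega⟩
    by_cases hnr : n ≤ t + 1
    · have hz : ∀ a ∈ Finset.Icc 1 n,
          (asc a s : ℚ) * ∑ m ∈ pparts (n - a) (t+1), 1 / prodFac m = 0 := by
        intro a ha
        rw [Finset.mem_Icc] at ha
        rw [show (∑ m ∈ pparts (n - a) (t+1), 1 / prodFac m) = Uu (n - a) (t+1) from rfl,
          Uu_small (by omega), mul_zero]
      rw [Finset.sum_congr rfl hz, Finset.sum_const_zero, mul_zero, bin,
        if_neg (by push_neg; intro hcon; omega), mul_zero]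
    · push_neg at hnr
      have hsplit : Finset.Icc 1 n = insert n (Finset.Icc 1 (n-1)) := by
        ext x
        simp only [Finset.mem_Icc, Finset.mem_insert]
        omega
      have hnot : n ∉ Finset.Icc 1 (n-1) := by
        rw [Finset.mem_Icc]; omega
      rw [hsplit, Finset.sum_insert hnot, Nat.sub_self,
        show (∑ m ∈ pparts 0 (t+1), 1 / prodFac m) = Uu 0 (t+1) from rfl,
        Uu_small (by omega), mul_zero, zero_add]
      have hterm : ∀ a ∈ Finset.Icc 1 (n-1),
          (asc a s : ℚ) * ∑ m ∈ pparts (n - a) (t+1), 1 / prodFac m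
            = (((asc a s * (n-a-1).choose t : ℕ)) : ℚ) / ((t+1).factorial : ℚ) := by
        intro a ha
        rw [Finset.mem_Icc] at ha
        rw [show (∑ m ∈ pparts (n - a) (t+1), 1 / prodFac m) = Uu (n - a) (t+1) from rfl,
          Uu_eq t (n - a) (by omega)]
        push_cast
        ring
      rw [Finset.sum_congr rfl hterm, ← Finset.sum_div, ← Nat.cast_sum]
      have hfne : (((t+1).factorial : ℕ) : ℚ) ≠ 0 := by
        exact_mod_cast (t+1).factorial_ne_zero
      rw [mul_comm, div_mul_cancel₀ _ hfne]
      have key : ∑ a ∈ Finset.Icc 1 (n-1), asc a s * (n-a-1).choose t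
          = s.factorial * (n+s-1).choose (s+t+1) := by
        have h1 : ∀ a ∈ Finset.Icc 1 (n-1), asc a s * (n-a-1).choose t
            = s.factorial * ((a-1+s).choose s * (n-a-1).choose t) := by
          intro a ha
          rw [Finset.mem_Icc] at ha
          rw [asc_eq_choose, show a+s-1 = a-1+s by omega]
          ring
        rw [Finset.sum_congr rfl h1, ← Finset.mul_sum]
        congr 1
        have h2 : ∑ a ∈ Finset.Icc 1 (n-1), (a-1+s).choose s * (n-a-1).choose t
            = ∑ i ∈ Finset.range (n-1), (i+s).choose s * ((n-2) - i).choose t := by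
          refine Finset.sum_nbij' (fun a => a - 1) (fun i => i + 1) ?_ ?_ ?_ ?_ ?_
          · intro a ha
            simp only [Finset.mem_Icc] at ha
            simp only [Finset.mem_range]
            omega
          · intro i hi
            simp only [Finset.mem_range] at hi
            simp only [Finset.mem_Icc]
            omega
          · intro a ha
            simp only [Finset.mem_Icc] at ha
            omega
          · intro i hi
            simp only [Finset.mem_range] at hi
            omega
          · intro a ha
            simp only [Finset.mem_Icc] at ha
            congr 2
            omega
        rw [h2, show n - 1 = (n-2) + 1 by omega, vtri s t (n-2)]
        congr 1
        omega
      rw [key]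
      have hb : bin ((n:ℤ) + s - 1) ((n:ℤ) - ((t+1+1 : ℕ) : ℤ)) = (((n+s-1).choose (n-t-2) : ℕ) : ℚ) := by
        rw [bin, if_pos (by constructor <;> omega)]
        have h1 : ((n:ℤ) + s - 1).toNat = n + s - 1 := by omega
        have h2 : ((n:ℤ) - ((t+1+1 : ℕ) : ℤ)).toNat = n - t - 2 := by omega
        rw [h1, h2]
      have hsym : (n+s-1).choose (n-t-2) = (n+s-1).choose (s+t+1) := by
        rw [← Nat.choose_symm (show s+t+1 ≤ n+s-1 by omega)]
        congr 1
        omega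
      rw [hb, hsym]
      push_cast
      ring
end

section
/- For any partition μ of length ℓ, the number ⟨μ, ℓ+1⟩ of (ℓ+1)-element subsets of the Ferrers diagram of μ containing at least one cell in each row equals (1/2)(|μ| - ℓ) ∏_{i=1}^{ℓ} μ_i. -/
open Finset

section Aux

/-- the set whose cardinality is `gbc`. -/
def covT (l : List ℕ) (r : ℕ) : Finset (Finset (ℕ × ℕ)) :=
  ((diagram l).powersetCard r).filter
    (fun S => ∀ i ∈ Finset.range l.length, ∃ c ∈ S, c.1 = i)

lemma gbc_eq (l : List ℕ) (r : ℕ) : gbc l r = (covT l r).card := rfl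

lemma mem_covT {l : List ℕ} {r : ℕ} {S : Finset (ℕ × ℕ)} :
    S ∈ covT l r ↔ S ⊆ diagram l ∧ S.card = r ∧ ∀ i < l.length, ∃ c ∈ S, c.1 = i := by
  simp [covT, Finset.mem_filter, Finset.mem_powersetCard, and_assoc]

lemma covT_eq_empty {l : List ℕ} {r : ℕ} (h : r < l.length) : covT l r = ∅ := by
  classical
  rw [Finset.eq_empty_iff_forall_notMem]
  intro S hS
  rw [mem_covT] at hS
  obtain ⟨hsub, hcard, hcov⟩ := hS
  set f : ℕ → ℕ × ℕ := fun i => if h : ∃ c ∈ S, c.1 = i then h.choose else (0, 0) with hf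
  have key : ∀ i < l.length, f i ∈ S ∧ (f i).1 = i := by
    intro i hi
    have h' := hcov i hi
    simp only [hf, dif_pos h']
    exact ⟨h'.choose_spec.1, h'.choose_spec.2⟩
  have hle : (Finset.range l.length).card ≤ S.card := by
    apply Finset.card_le_card_of_injOn f
    · intro i hi
      exact (key i (Finset.mem_range.mp hi)).1
    · intro i hi i' hi' he
      simp only [Finset.coe_range, Set.mem_Iio] at hi hi'
      rw [← (key i hi).2, ← (key i' hi').2, he]
  simp only [Finset.card_range, hcard] at hle
  omega

lemma covT_nil_zero : covT [] 0 = {∅} := by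
  decide

lemma covT_cons (a : ℕ) (l : List ℕ) (r : ℕ) :
    (covT (a :: l) r).card
      = ∑ j ∈ Finset.Icc 1 r, a.choose j * (covT l (r - j)).card := by
  classical
  have hcardT : ((Finset.Icc 1 r).sigma fun j =>
      ((Finset.range a).powersetCard j) ×ˢ covT l (r - j)).card
      = ∑ j ∈ Finset.Icc 1 r, a.choose j * (covT l (r - j)).card := by
    rw [Finset.card_sigma]
    refine Finset.sum_congr rfl fun j _ => ?_
    rw [Finset.card_product, Finset.card_powersetCard, Finset.card_range]
  rw [← hcardT]
  refine Finset.card_bij'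
    (fun S _ => ⟨(S.filter fun c => c.1 = 0).card,
      ((S.filter fun c => c.1 = 0).image Prod.snd,
       (S.filter fun c => ¬ c.1 = 0).image fun c => (c.1 - 1, c.2))⟩)
    (fun p _ => (p.2.1.image fun y => ((0 : ℕ), y)) ∪ (p.2.2.image fun c => (c.1 + 1, c.2)))
    ?_ ?_ ?_ ?_
  · -- forward map lands in target
    intro S hS
    rw [mem_covT] at hS
    obtain ⟨hsub, hcard, hcov⟩ := hS
    simp only [List.length_cons] at hcov
    have hA : ∀ c ∈ S, c.1 = 0 → c.2 < a := by
      intro c hc h0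
      have := mem_diagram.mp (hsub hc)
      rw [h0] at this
      simpa using this.2
    have hk1 : 1 ≤ (S.filter fun c => c.1 = 0).card := by
      obtain ⟨c, hc, hc0⟩ := hcov 0 (Nat.succ_pos _)
      have : c ∈ S.filter fun c => c.1 = 0 := Finset.mem_filter.mpr ⟨hc, hc0⟩
      exact Finset.card_pos.mpr ⟨c, this⟩
    have hkr : (S.filter fun c => c.1 = 0).card ≤ r := by
      rw [← hcard]; exact Finset.card_le_card (Finset.filter_subset _ _)
    have hsplit : (S.filter fun c => c.1 = 0).card
        + (S.filter fun c => ¬ c.1 = 0).card = r := by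
      rw [← hcard]; exact Finset.card_filter_add_card_filter_not _
    refine Finset.mem_sigma.mpr ⟨Finset.mem_Icc.mpr ⟨hk1, hkr⟩, ?_⟩
    dsimp only
    rw [Finset.mem_product]
    constructor
    · rw [Finset.mem_powersetCard]
      constructor
      · intro y hy
        obtain ⟨c, hc, rfl⟩ := Finset.mem_image.mp hy
        rw [Finset.mem_filter] at hc
        exact Finset.mem_range.mpr (hA c hc.1 hc.2)
      · apply Finset.card_image_of_injOn
        intro c hc d hd he
        rw [Finset.mem_coe, Finset.mem_filter] at hc hd
        exact Prod.ext (hc.2.trans hd.2.symm) he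
    · rw [mem_covT]
      refine ⟨?_, ?_, ?_⟩
      · intro c hc
        obtain ⟨d, hd, rfl⟩ := Finset.mem_image.mp hc
        rw [Finset.mem_filter] at hd
        have hm := mem_diagram.mp (hsub hd.1)
        rw [mem_diagram]
        have h1 : d.1 ≠ 0 := hd.2
        obtain ⟨m, hm'⟩ : ∃ m, d.1 = m + 1 := ⟨d.1 - 1, by omega⟩
        rw [hm'] at hm
        simp only [List.length_cons, List.getD_cons_succ] at hm
        constructor
        · simp only; omega
        · simpa [hm'] using hm.2
      · rw [Finset.card_image_of_injOn]
        · omega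
        · intro c hc d hd he
          rw [Finset.mem_coe, Finset.mem_filter] at hc hd
          have h' := Prod.ext_iff.mp he
          simp only at h'
          have h1 : c.1 ≠ 0 := hc.2
          have h2 : d.1 ≠ 0 := hd.2
          exact Prod.ext (by omega) h'.2
      · intro i hi
        obtain ⟨c, hc, hc1⟩ := hcov (i + 1) (by omega)
        refine ⟨(c.1 - 1, c.2), ?_, by simp [hc1]⟩
        apply Finset.mem_image_of_mem
        rw [Finset.mem_filter]
        exact ⟨hc, by omega⟩
  · -- backward map lands in source
    rintro ⟨k, S0, S1⟩ hp
    rw [Finset.mem_sigma, Finset.mem_product, Finset.mem_powersetCard, mem_covT] at hp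
    obtain ⟨hk, ⟨hS0sub, hS0card⟩, hS1sub, hS1card, hS1cov⟩ := hp
    rw [Finset.mem_Icc] at hk
    dsimp only at hk hS0sub hS0card hS1sub hS1card hS1cov ⊢
    rw [mem_covT]
    refine ⟨?_, ?_, ?_⟩
    · intro c hc
      rw [Finset.mem_union] at hc
      rcases hc with hc | hc
      · obtain ⟨y, hy, rfl⟩ := Finset.mem_image.mp hc
        rw [mem_diagram]
        exact ⟨Nat.succ_pos _, by simpa using Finset.mem_range.mp (hS0sub hy)⟩
      · obtain ⟨d, hd, rfl⟩ := Finset.mem_image.mp hc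
        have hm := mem_diagram.mp (hS1sub hd)
        rw [mem_diagram]
        simp only [List.length_cons, List.getD_cons_succ]
        exact ⟨by omega, hm.2⟩
    · rw [Finset.card_union_of_disjoint, Finset.card_image_of_injective _
        (fun y z h => by simpa using h), Finset.card_image_of_injective, hS0card, hS1card]
      · omega
      · intro c d h
        rw [Prod.mk.injEq] at h
        exact Prod.ext (by omega) h.2
      · rw [Finset.disjoint_left]
        rintro c hc hc'
        obtain ⟨y, hy, rfl⟩ := Finset.mem_image.mp hc
        obtain ⟨d, hd, he⟩ := Finset.mem_image.mp hc'
        rw [Prod.mk.injEq] at he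
        omega
    · intro i hi
      simp only [List.length_cons] at hi
      rcases Nat.eq_zero_or_pos i with rfl | hipos
      · obtain ⟨y, hy⟩ := Finset.card_pos.mp (by omega : 0 < S0.card)
        exact ⟨(0, y), Finset.mem_union_left _ (Finset.mem_image_of_mem _ hy), rfl⟩
      · obtain ⟨c, hc, hc1⟩ := hS1cov (i - 1) (by omega)
        refine ⟨(c.1 + 1, c.2), Finset.mem_union_right _ (Finset.mem_image_of_mem _ hc), ?_⟩
        simp only
        omega
  · -- left inverse
    intro S hS
    dsimp only
    rw [mem_covT] at hS
    obtain ⟨hsub, -, -⟩ := hS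
    ext c
    simp only [Finset.mem_union, Finset.mem_image, Finset.mem_filter]
    constructor
    · rintro (⟨y, ⟨d, ⟨hd, hd0⟩, rfl⟩, rfl⟩ | ⟨e, ⟨d, ⟨hd, hd0⟩, rfl⟩, rfl⟩)
      · have : d = (0, d.2) := Prod.ext hd0 rfl
        rwa [← this]
      · have : (d.1 - 1 + 1, d.2) = d := Prod.ext (by omega) rfl
        rwa [this]
    · intro hc
      by_cases h0 : c.1 = 0
      · exact Or.inl ⟨c.2, ⟨c, ⟨hc, h0⟩, rfl⟩, Prod.ext h0.symm rfl⟩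
      · exact Or.inr ⟨(c.1 - 1, c.2), ⟨c, ⟨hc, h0⟩, rfl⟩, Prod.ext (by simp; omega) rfl⟩
  · -- right inverse
    rintro ⟨k, S0, S1⟩ hp
    rw [Finset.mem_sigma, Finset.mem_product, Finset.mem_powersetCard, mem_covT] at hp
    obtain ⟨hk, ⟨hS0sub, hS0card⟩, hS1sub, hS1card, hS1cov⟩ := hp
    dsimp only at hk hS0sub hS0card hS1sub hS1card hS1cov ⊢
    have hfil0 : (((S0.image fun y => ((0:ℕ), y)) ∪ (S1.image fun c => (c.1 + 1, c.2))).filter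
        fun c => c.1 = 0) = S0.image fun y => ((0:ℕ), y) := by
      ext c
      simp only [Finset.mem_filter, Finset.mem_union, Finset.mem_image]
      constructor
      · rintro ⟨h | h, h0⟩
        · exact h
        · obtain ⟨d, hd, rfl⟩ := h
          simp at h0
      · rintro ⟨y, hy, rfl⟩
        exact ⟨Or.inl ⟨y, hy, rfl⟩, rfl⟩
    have hfil1 : (((S0.image fun y => ((0:ℕ), y)) ∪ (S1.image fun c => (c.1 + 1, c.2))).filter
        fun c => ¬ c.1 = 0) = S1.image fun c => (c.1 + 1, c.2) := by
      ext c
      simp only [Finset.mem_filter, Finset.mem_union, Finset.mem_image]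
      constructor
      · rintro ⟨h | h, h0⟩
        · obtain ⟨y, hy, rfl⟩ := h
          simp at h0
        · exact h
      · rintro ⟨d, hd, rfl⟩
        exact ⟨Or.inr ⟨d, hd, rfl⟩, by simp⟩
    have e1 : (((S0.image fun y => ((0:ℕ), y)) ∪ (S1.image fun c => (c.1 + 1, c.2))).filter
        fun c => c.1 = 0).card = k := by
      rw [hfil0, Finset.card_image_of_injective _ (fun y z h => by simpa using h), hS0card]
    refine Sigma.ext e1 (heq_of_eq ?_)
    rw [Prod.mk.injEq]  -- goal is pair equality
    constructor
    · rw [hfil0, Finset.image_image]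
      ext y
      simp
    · rw [hfil1, Finset.image_image]
      ext c
      simp only [Finset.mem_image, Function.comp]
      constructor
      · rintro ⟨d, hd, rfl⟩
        simpa using hd
      · intro hc
        exact ⟨c, hc, by simp⟩

lemma gbc_exact (l : List ℕ) : gbc l l.length = l.prod := by
  induction l with
  | nil => rw [gbc_eq]; rw [List.length_nil, covT_nil_zero]; rfl
  | cons a l ih =>
    rw [gbc_eq, List.length_cons, covT_cons]
    rw [Finset.sum_eq_single_of_mem 1 (Finset.mem_Icc.mpr ⟨le_refl 1, by omega⟩)]
    · rw [Nat.choose_one_right, Nat.add_sub_cancel, ← gbc_eq, ih, List.prod_cons]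
    · intro j hj hj1
      rw [Finset.mem_Icc] at hj
      rw [covT_eq_empty (by omega), Finset.card_empty, Nat.mul_zero]

lemma gbc_main (l : List ℕ) :
    (gbc l (l.length + 1) : ℚ)
      = (1 / 2) * ((l.sum : ℚ) - l.length) * (l.prod : ℚ) := by
  induction l with
  | nil =>
    have : covT [] 1 = ∅ := by decide
    rw [gbc_eq]
    simp [this]
  | cons a l ih =>
    rw [gbc_eq, List.length_cons, covT_cons]
    have hsub : ({1, 2} : Finset ℕ) ⊆ Finset.Icc 1 (l.length + 1 + 1) := by
      intro x hx
      simp only [Finset.mem_insert, Finset.mem_singleton] at hx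
      rw [Finset.mem_Icc]
      omega
    rw [← Finset.sum_subset hsub]
    · rw [Finset.sum_pair (by omega : (1:ℕ) ≠ 2)]
      rw [Nat.choose_one_right]
      have h1 : l.length + 1 + 1 - 1 = l.length + 1 := by omega
      have h2 : l.length + 1 + 1 - 2 = l.length := by omega
      rw [h1, h2, ← gbc_eq, ← gbc_eq, gbc_exact]
      push_cast [ih, Nat.cast_choose_two, List.map_cons, List.sum_cons, List.prod_cons]
      ring
    · intro j hj hj2
      rw [Finset.mem_Icc] at hj
      simp only [Finset.mem_insert, Finset.mem_singleton] at hj2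
      rw [covT_eq_empty (by omega), Finset.card_empty, Nat.mul_zero]

end Aux

theorem stmt9 (l : List ℕ) (hpos : ∀ a ∈ l, 0 < a) (hsort : List.Pairwise (· ≥ ·) l) :
    (gbc l (l.length + 1) : ℚ)
      = (1 / 2) * ((l.sum : ℚ) - l.length) * (l.prod : ℚ) := gbc_main l
end

section
/- For all integers a, b, c, d with 0 ≤ c ≤ d: C(a+b-1, d-c) C(b+c-1, c-1) = ∑_{i=c}^{d} C(i-1, c-1) C(a-i-1, a-d-1) C(b+i-1, i-1). -/
open Finset

-- Vandermonde for rising binomials: ∑ C(r+k,k) C(s+n-k, n-k) = C(r+s+n+1, n)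
lemma vand : ∀ (n s r : ℕ), ∑ k ∈ Finset.range (n+1),
    (r+k).choose k * (s+(n-k)).choose (n-k) = (r+s+n+1).choose n := by
  intro n
  induction n with
  | zero => intro s r; simp
  | succ n ih =>
    intro s
    induction s with
    | zero =>
      intro r
      have h0 : ∀ k ∈ Finset.range (n+2), (r+k).choose k * (0+(n+1-k)).choose (n+1-k)
          = (r+k).choose k := by intro k hk; simp
      rw [Finset.sum_congr rfl h0, Finset.sum_range_succ]
      have h1 := ih 0 r
      simp only [Nat.zero_add, Nat.choose_self, Nat.mul_one, Nat.add_zero] at h1 ⊢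
      rw [h1, show r+(n+1)+1 = (r+n+1)+1 from by ring, Nat.choose_succ_succ]
      rfl
    | succ s ihs =>
      intro r
      have key : ∀ k ∈ Finset.range (n+1), (r+k).choose k * ((s+1)+(n+1-k)).choose (n+1-k)
          = (r+k).choose k * (s+(n+1-k)).choose (n+1-k)
            + (r+k).choose k * ((s+1)+(n-k)).choose (n-k) := by
        intro k hk
        have hk' : k ≤ n := Finset.mem_range_succ_iff.mp hk
        have h1 : n+1-k = (n-k)+1 := by omega
        rw [h1, ← Nat.mul_add]
        congr 1
        generalize n - k = j
        rw [show (s+1)+(j+1) = (s+j+1)+1 from by ring, Nat.choose_succ_succ,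
          show s+(j+1) = s+j+1 from by ring, show (s+1)+j = s+j+1 from by ring]
        exact Nat.add_comm _ _
      rw [Finset.sum_range_succ, Finset.sum_congr rfl key, Finset.sum_add_distrib]
      have A := ihs r
      rw [Finset.sum_range_succ] at A
      have B := ih (s+1) r
      have C : (r+(s+1)+(n+1)+1).choose (n+1)
          = (r+(s+1)+n+1).choose n + (r+s+(n+1)+1).choose (n+1) := by
        rw [show r+(s+1)+(n+1)+1 = (r+s+n+2)+1 from by ring, Nat.choose_succ_succ,
          show r+(s+1)+n+1 = r+s+n+2 from by ring, show r+s+(n+1)+1 = r+s+n+2 from by ring]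
      simp only [Nat.sub_self, Nat.add_zero, Nat.choose_zero_right, Nat.mul_one] at A ⊢
      omega

lemma prod_id (B c' k : ℕ) :
    (c'+k).choose c' * (B+c'+k).choose (c'+k) = (B+c').choose c' * (B+c'+k).choose k := by
  rw [mul_comm]
  rw [Nat.choose_mul (by omega : c' ≤ c'+k)]
  rw [show B+c'+k-c' = B+k from by omega, show c'+k-c' = k from by omega]
  rw [mul_comm ((B+c').choose c'), Nat.choose_symm_of_eq_add (by omega : B+c'+k = k+(B+c'))]
  rw [Nat.choose_mul (by omega : c' ≤ B+c')]
  rw [show B+c'+k-c' = B+k from by omega, show B+c'-c' = B from by omega,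
    Nat.choose_symm_of_eq_add (by omega : B+k = k+B)]

lemma main_nat (B c' m e : ℕ) :
    (c'+m+e+B+1).choose m * (B+c').choose c'
      = ∑ k ∈ Finset.range (m+1),
          (c'+k).choose c' * (e+(m-k)).choose e * (B+c'+k).choose (c'+k) := by
  have step : ∀ k ∈ Finset.range (m+1),
      (c'+k).choose c' * (e+(m-k)).choose e * (B+c'+k).choose (c'+k)
        = (B+c').choose c' * (((B+c')+k).choose k * (e+(m-k)).choose (m-k)) := by
    intro k hk
    have h1 : (e+(m-k)).choose e = (e+(m-k)).choose (m-k) :=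
      Nat.choose_symm_of_eq_add rfl
    rw [h1, mul_right_comm, prod_id]
    ring_nf
  rw [Finset.sum_congr rfl step, ← Finset.mul_sum, vand m e (B+c'),
    show B+c'+e+m+1 = c'+m+e+B+1 from by ring, mul_comm]

lemma bin_eval {x y : ℤ} {X Y : ℕ} (hx : x = X) (hy : y = Y) (h : Y ≤ X) :
    bin x y = (X.choose Y : ℚ) := by
  subst hx hy
  rw [bin, if_pos ⟨Int.natCast_nonneg Y, by exact_mod_cast h⟩, Int.toNat_natCast,
    Int.toNat_natCast]


theorem stmt14 (a b c d : ℤ) (hb : 0 ≤ b) (hc : 0 ≤ c) (hcd : c ≤ d) (hda : d < a) :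
    bin (a + b - 1) (d - c) * bin (b + c - 1) (c - 1)
      = ∑ i ∈ Finset.Icc c d, bin (i - 1) (c - 1) * bin (a - i - 1) (a - d - 1)
          * bin (b + i - 1) (i - 1) := by
  rcases eq_or_lt_of_le hc with h0 | hc1
  · -- c = 0 : both sides vanish since C(·, -1) = 0
    have hneg : ∀ x : ℤ, bin x (c - 1) = 0 := by
      intro x; rw [bin, if_neg]; omega
    rw [hneg]
    simp only [hneg, zero_mul, mul_zero, Finset.sum_const_zero]
  · obtain ⟨c', hc'⟩ : ∃ n : ℕ, c = (n : ℤ) + 1 := ⟨(c-1).toNat, by omega⟩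
    obtain ⟨B, hB⟩ : ∃ n : ℕ, b = (n : ℤ) := ⟨b.toNat, by omega⟩
    obtain ⟨m, hm⟩ : ∃ n : ℕ, d = c + (n : ℤ) := ⟨(d-c).toNat, by omega⟩
    obtain ⟨e, he⟩ : ∃ n : ℕ, a = d + (n : ℤ) + 1 := ⟨(a-d-1).toNat, by omega⟩
    subst hB hc' hm he
    have himg : Finset.Icc ((c' : ℤ) + 1) (((c' : ℤ) + 1) + m)
        = Finset.image (fun k : ℕ => ((c' : ℤ) + 1) + k) (Finset.range (m+1)) := by
      ext x
      simp only [Finset.mem_Icc, Finset.mem_image, Finset.mem_range]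
      constructor
      · intro hx
        exact ⟨(x - c' - 1).toNat, by omega, by omega⟩
      · rintro ⟨k, hk, rfl⟩; omega
    rw [himg, Finset.sum_image (by intro x _ y _ h; simp only at h; omega)]
    have hL1 : bin ((c':ℤ)+1+m+e+1 + B - 1) ((c':ℤ)+1+m - ((c':ℤ)+1))
        = ((c'+m+e+B+1).choose m : ℚ) := bin_eval (by push_cast; ring) (by push_cast; ring) (by omega)
    have hL2 : bin ((B:ℤ) + ((c':ℤ)+1) - 1) (((c':ℤ)+1) - 1)
        = ((B+c').choose c' : ℚ) := bin_eval (by push_cast; ring) (by push_cast; ring) (by omega)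
    rw [hL1, hL2, ← Nat.cast_mul, main_nat B c' m e, Nat.cast_sum]
    refine Finset.sum_congr rfl ?_
    intro k hk
    have hkm : k ≤ m := Finset.mem_range_succ_iff.mp hk
    have h1 : bin ((c':ℤ)+1+k - 1) ((c':ℤ)+1 - 1) = ((c'+k).choose c' : ℚ) :=
      bin_eval (by push_cast; ring) (by push_cast; ring) (by omega)
    have h2 : bin ((c':ℤ)+1+m+e+1 - ((c':ℤ)+1+k) - 1) ((c':ℤ)+1+m+e+1 - ((c':ℤ)+1+m) - 1)
        = ((e+(m-k)).choose e : ℚ) :=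
      bin_eval (by push_cast [Nat.cast_sub hkm]; ring) (by push_cast; ring) (by omega)
    have h3 : bin ((B:ℤ) + ((c':ℤ)+1+k) - 1) ((c':ℤ)+1+k - 1)
        = ((B+c'+k).choose (c'+k) : ℚ) :=
      bin_eval (by push_cast; ring) (by push_cast; ring) (by omega)
    rw [h1, h2, h3]
    push_cast
    ring
end
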